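/- The limiting two-layer system has at most one solution: if (Ĉ, Ŵ¹, Ŵ²) and (C̄, W̄¹, W̄²) are two uniformly bounded solutions of the limiting two-layer system on [0,1] (with the same initial conditions Ĉ_0^c = C̄_0^c = c, Ŵ_0^{1,w} = W̄_0^{1,w} = w, Ŵ_0^{2,c,w,u} = W̄_0^{2,c,w,u} = u), then for every t ∈ [0,1] and every (c,w,u,x) ∈ C×W¹×W²×X one has Ĉ_t^c = C̄_t^c, Ŵ_t^{1,w} = W̄_t^{1,w}, Ŵ_t^{2,c,w,u} = W̄_t^{2,c,w,u}, and consequently the associated quantities Z̃_t^c(x), V_t^w(x) and the network outputs g_t(x) of the two solutions coincide. -/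

import Mathlib

open MeasureTheory
open scoped RealInnerProductSpace BigOperators

/-- `ℝ^d` as a Euclidean space. -/
abbrev Euc (d : ℕ) := EuclideanSpace ℝ (Fin d)

/-- The quantity `Z̃_t^c(x) = ∫∫ W̃_t^{2,c,w,u} σ(W̃_t^{1,w}·x) μ_{W²}(du) μ_{W¹}(dw)`
of the limiting two-layer system. -/
noncomputable def limZ {d : ℕ} (σ : ℝ → ℝ) (μW1 : Measure (Euc d)) (μW2 : Measure ℝ)
    (W1t : ℝ → Euc d → Euc d) (W2t : ℝ → ℝ → Euc d → ℝ → ℝ)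
    (t c : ℝ) (x : Euc d) : ℝ :=
  ∫ w, (∫ u, W2t t c w u * σ (⟪W1t t w, x⟫) ∂μW2) ∂μW1

/-- The network output `g_t(x) = ∫ C̃_t^c σ(Z̃_t^c(x)) μ_c(dc)` of the limiting system. -/
noncomputable def limG {d : ℕ} (σ : ℝ → ℝ) (μc : Measure ℝ) (μW1 : Measure (Euc d))
    (μW2 : Measure ℝ) (Ct : ℝ → ℝ → ℝ) (W1t : ℝ → Euc d → Euc d)
    (W2t : ℝ → ℝ → Euc d → ℝ → ℝ) (t : ℝ) (x : Euc d) : ℝ :=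
  ∫ c, Ct t c * σ (limZ σ μW1 μW2 W1t W2t t c x) ∂μc

/-- The quantity `V_t^w(x) = ∫ C̃_t^c σ'(Z̃_t^c(x)) (∫ W̃_t^{2,c,w,u} μ_{W²}(du)) μ_c(dc)`
of the limiting system. -/
noncomputable def limV {d : ℕ} (σ : ℝ → ℝ) (μc : Measure ℝ) (μW1 : Measure (Euc d))
    (μW2 : Measure ℝ) (Ct : ℝ → ℝ → ℝ) (W1t : ℝ → Euc d → Euc d)
    (W2t : ℝ → ℝ → Euc d → ℝ → ℝ) (t : ℝ) (w : Euc d) (x : Euc d) : ℝ :=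
  ∫ c, Ct t c * deriv σ (limZ σ μW1 μW2 W1t W2t t c x) * (∫ u, W2t t c w u ∂μW2) ∂μc

/-- `(Ct, W1t, W2t)` is a solution of the limiting two-layer system on `[0,1]`:
continuity in time, joint measurability in the parameters, and the integral equations. -/
def IsLimitSolution {d : ℕ} (σ : ℝ → ℝ) (π : Measure (Euc d × ℝ))
    (μc : Measure ℝ) (μW1 : Measure (Euc d)) (μW2 : Measure ℝ)
    (SC : Set ℝ) (SW1 : Set (Euc d)) (SW2 : Set ℝ)
    (Ct : ℝ → ℝ → ℝ) (W1t : ℝ → Euc d → Euc d) (W2t : ℝ → ℝ → Euc d → ℝ → ℝ) : Prop :=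
  (∀ c ∈ SC, ContinuousOn (fun t => Ct t c) (Set.Icc 0 1)) ∧
  (∀ w ∈ SW1, ContinuousOn (fun t => W1t t w) (Set.Icc 0 1)) ∧
  (∀ c ∈ SC, ∀ w ∈ SW1, ∀ u ∈ SW2, ContinuousOn (fun t => W2t t c w u) (Set.Icc 0 1)) ∧
  (∀ t, Measurable (Ct t)) ∧
  (∀ t, Measurable (W1t t)) ∧
  (∀ t, Measurable (fun q : ℝ × Euc d × ℝ => W2t t q.1 q.2.1 q.2.2)) ∧
  (∀ t ∈ Set.Icc (0:ℝ) 1, ∀ c ∈ SC,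
    Ct t c = c + ∫ s in Set.Icc (0:ℝ) t,
      (∫ p, (p.2 - limG σ μc μW1 μW2 Ct W1t W2t s p.1) *
        σ (limZ σ μW1 μW2 W1t W2t s c p.1) ∂π)) ∧
  (∀ t ∈ Set.Icc (0:ℝ) 1, ∀ w ∈ SW1,
    W1t t w = w + ∫ s in Set.Icc (0:ℝ) t,
      (∫ p, ((p.2 - limG σ μc μW1 μW2 Ct W1t W2t s p.1) *
        limV σ μc μW1 μW2 Ct W1t W2t s w p.1 *
        deriv σ (⟪W1t s w, p.1⟫)) • p.1 ∂π)) ∧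
  (∀ t ∈ Set.Icc (0:ℝ) 1, ∀ c ∈ SC, ∀ w ∈ SW1, ∀ u ∈ SW2,
    W2t t c w u = u + ∫ s in Set.Icc (0:ℝ) t,
      (∫ p, (p.2 - limG σ μc μW1 μW2 Ct W1t W2t s p.1) * Ct s c *
        deriv σ (limZ σ μW1 μW2 W1t W2t s c p.1) * σ (⟪W1t s w, p.1⟫) ∂π))


attribute [local fun_prop] Measurable.inner

lemma ae_mem_of_compl_null {α : Type*} [MeasurableSpace α] {μ : Measure α} {S : Set α}
    (h : μ Sᶜ = 0) : ∀ᵐ a ∂μ, a ∈ S := by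
  rw [MeasureTheory.ae_iff]; exact h
lemma norm_integral_le_of_ae {α E : Type*} [MeasurableSpace α] (μ : Measure α)
    [IsProbabilityMeasure μ] [NormedAddCommGroup E] [NormedSpace ℝ E]
    {f : α → E} {C : ℝ} (h : ∀ᵐ a ∂μ, ‖f a‖ ≤ C) :
    ‖∫ a, f a ∂μ‖ ≤ C := by
  have := norm_integral_le_of_norm_le (f := f) (g := fun _ => C) (integrable_const C) h
  simpa using this
lemma abs_integral_le_of_ae {α : Type*} [MeasurableSpace α] (μ : Measure α)
    [IsProbabilityMeasure μ] {f : α → ℝ} {C : ℝ} (h : ∀ᵐ a ∂μ, |f a| ≤ C) :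
    |∫ a, f a ∂μ| ≤ C := by
  have := norm_integral_le_of_ae (E := ℝ) μ (f := f) (C := C)
    (by simpa [Real.norm_eq_abs] using h)
  simpa [Real.norm_eq_abs] using this

lemma abs_mul_le' {a b Ma Mb : ℝ} (h1 : |a| ≤ Ma) (h2 : |b| ≤ Mb) : |a*b| ≤ Ma*Mb := by
  rw [abs_mul]; exact mul_le_mul h1 h2 (abs_nonneg _) ((abs_nonneg _).trans h1)

lemma abs_mul_sub_le' {a₁ a₂ b₁ b₂ da db Ma Mb : ℝ} (h1 : |a₁-a₂| ≤ da) (h2 : |b₁| ≤ Mb)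
    (h3 : |a₂| ≤ Ma) (h4 : |b₁-b₂| ≤ db) : |a₁*b₁ - a₂*b₂| ≤ da*Mb + Ma*db := by
  have e : a₁*b₁ - a₂*b₂ = (a₁-a₂)*b₁ + a₂*(b₁-b₂) := by ring
  calc |a₁*b₁ - a₂*b₂| ≤ |(a₁-a₂)*b₁| + |a₂*(b₁-b₂)| := by rw [e]; exact abs_add_le _ _
    _ ≤ da*Mb + Ma*db := add_le_add (abs_mul_le' h1 h2) (abs_mul_le' h3 h4)

section Bounds
variable {d : ℕ} {σ : ℝ → ℝ} {μc : Measure ℝ} {μW1 : Measure (Euc d)} {μW2 : Measure ℝ}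
  {Ct : ℝ → ℝ → ℝ} {W1t : ℝ → Euc d → Euc d} {W2t : ℝ → ℝ → Euc d → ℝ → ℝ} {t : ℝ}
  {SC : Set ℝ} {SW1 : Set (Euc d)} {SW2 : Set ℝ} {B M : ℝ}
  [IsProbabilityMeasure μc] [IsProbabilityMeasure μW1] [IsProbabilityMeasure μW2]

lemma bound_limZ (hμ1 : μW1 SW1ᶜ = 0) (hμ2 : μW2 SW2ᶜ = 0)
    (hσB : ∀ z, |σ z| ≤ B) (hM : 0 ≤ M)
    (hM2 : ∀ c ∈ SC, ∀ w ∈ SW1, ∀ u ∈ SW2, |W2t t c w u| ≤ M)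
    {c : ℝ} (hc : c ∈ SC) (x : Euc d) :
    |limZ σ μW1 μW2 W1t W2t t c x| ≤ M * B := by
  rw [limZ]
  apply abs_integral_le_of_ae
  filter_upwards [ae_mem_of_compl_null hμ1] with w hw
  apply abs_integral_le_of_ae
  filter_upwards [ae_mem_of_compl_null hμ2] with u hu
  exact abs_mul_le' (hM2 c hc w hw u hu) (hσB _)

lemma bound_J (hμ2 : μW2 SW2ᶜ = 0)
    (hM2 : ∀ c ∈ SC, ∀ w ∈ SW1, ∀ u ∈ SW2, |W2t t c w u| ≤ M)
    {c : ℝ} (hc : c ∈ SC) {w : Euc d} (hw : w ∈ SW1) :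
    |∫ u, W2t t c w u ∂μW2| ≤ M := by
  apply abs_integral_le_of_ae
  filter_upwards [ae_mem_of_compl_null hμ2] with u hu
  exact hM2 c hc w hw u hu

lemma bound_limG (hμc : μc SCᶜ = 0) (hμ1 : μW1 SW1ᶜ = 0) (hμ2 : μW2 SW2ᶜ = 0)
    (hσB : ∀ z, |σ z| ≤ B)
    (hMc : ∀ c ∈ SC, |Ct t c| ≤ M) (x : Euc d) :
    |limG σ μc μW1 μW2 Ct W1t W2t t x| ≤ M * B := by
  rw [limG]
  apply abs_integral_le_of_ae
  filter_upwards [ae_mem_of_compl_null hμc] with c hc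
  exact abs_mul_le' (hMc c hc) (hσB _)

lemma bound_limV (hμc : μc SCᶜ = 0) (hμ2 : μW2 SW2ᶜ = 0)
    (hσB : ∀ z, |deriv σ z| ≤ B) (hM : 0 ≤ M)
    (hMc : ∀ c ∈ SC, |Ct t c| ≤ M)
    (hM2 : ∀ c ∈ SC, ∀ w ∈ SW1, ∀ u ∈ SW2, |W2t t c w u| ≤ M)
    {w : Euc d} (hw : w ∈ SW1) (x : Euc d) :
    |limV σ μc μW1 μW2 Ct W1t W2t t w x| ≤ M * B * M := by
  rw [limV]
  apply abs_integral_le_of_ae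
  filter_upwards [ae_mem_of_compl_null hμc] with c hc
  exact abs_mul_le' (abs_mul_le' (hMc c hc) (hσB _)) (bound_J hμ2 hM2 hc hw)
end Bounds

attribute [local fun_prop] Measurable.inner

section Meas
variable {d : ℕ} {σ : ℝ → ℝ} {μc : Measure ℝ} {μW1 : Measure (Euc d)} {μW2 : Measure ℝ}
  {Ct : ℝ → ℝ → ℝ} {W1t : ℝ → Euc d → Euc d} {W2t : ℝ → ℝ → Euc d → ℝ → ℝ} {t : ℝ}
  [SFinite μc] [SFinite μW1] [SFinite μW2]

lemma measurable_limZ (hσ : Continuous σ) (h1 : Measurable (W1t t))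
    (h2 : Measurable (fun q : ℝ × Euc d × ℝ => W2t t q.1 q.2.1 q.2.2)) :
    Measurable (fun q : ℝ × Euc d => limZ σ μW1 μW2 W1t W2t t q.1 q.2) := by
  have hm1 : Measurable (fun r : ((ℝ × Euc d) × Euc d) × ℝ =>
      W2t t r.1.1.1 r.1.2 r.2 * σ (⟪W1t t r.1.2, r.1.1.2⟫)) := by fun_prop
  have hi : StronglyMeasurable (fun r : (ℝ × Euc d) × Euc d =>
      ∫ u, W2t t r.1.1 r.2 u * σ (⟪W1t t r.2, r.1.2⟫) ∂μW2) :=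
    hm1.stronglyMeasurable.integral_prod_right'
  have ho : StronglyMeasurable (fun q : ℝ × Euc d =>
      ∫ w, (∫ u, W2t t q.1 w u * σ (⟪W1t t w, q.2⟫) ∂μW2) ∂μW1) :=
    hi.integral_prod_right'
  simpa [limZ] using ho.measurable

lemma measurable_J (h2 : Measurable (fun q : ℝ × Euc d × ℝ => W2t t q.1 q.2.1 q.2.2)) :
    Measurable (fun q : ℝ × Euc d => ∫ u, W2t t q.1 q.2 u ∂μW2) := by
  have hm1 : Measurable (fun r : (ℝ × Euc d) × ℝ => W2t t r.1.1 r.1.2 r.2) := by fun_prop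
  exact hm1.stronglyMeasurable.integral_prod_right'.measurable

lemma measurable_limG (hσ : Continuous σ) (hC : Measurable (Ct t)) (h1 : Measurable (W1t t))
    (h2 : Measurable (fun q : ℝ × Euc d × ℝ => W2t t q.1 q.2.1 q.2.2)) :
    Measurable (fun x : Euc d => limG σ μc μW1 μW2 Ct W1t W2t t x) := by
  have hZ := measurable_limZ (μW1 := μW1) (μW2 := μW2) hσ h1 h2
  have hm : Measurable (fun r : Euc d × ℝ =>
      Ct t r.2 * σ (limZ σ μW1 μW2 W1t W2t t r.2 r.1)) := by fun_prop
  simpa [limG] using hm.stronglyMeasurable.integral_prod_right'.measurable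

lemma measurable_limV (hσ : Continuous (deriv σ)) (hσ0 : Continuous σ)
    (hC : Measurable (Ct t)) (h1 : Measurable (W1t t))
    (h2 : Measurable (fun q : ℝ × Euc d × ℝ => W2t t q.1 q.2.1 q.2.2)) :
    Measurable (fun q : Euc d × Euc d => limV σ μc μW1 μW2 Ct W1t W2t t q.1 q.2) := by
  have hZ := measurable_limZ (μW1 := μW1) (μW2 := μW2) hσ0 h1 h2
  have hJ := measurable_J (μW2 := μW2) (t := t) h2
  have hJ' : Measurable (fun r : (Euc d × Euc d) × ℝ => ∫ u, W2t t r.2 r.1.1 u ∂μW2) :=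
    hJ.comp (by fun_prop : Measurable fun r : (Euc d × Euc d) × ℝ => (r.2, r.1.1))
  have hm : Measurable (fun r : (Euc d × Euc d) × ℝ =>
      Ct t r.2 * deriv σ (limZ σ μW1 μW2 W1t W2t t r.2 r.1.2) *
        (∫ u, W2t t r.2 r.1.1 u ∂μW2)) := by fun_prop
  simpa [limV] using hm.stronglyMeasurable.integral_prod_right'.measurable
end Meas
lemma lip_of_deriv_bound {f : ℝ → ℝ} (hf : Differentiable ℝ f) {B : ℝ}
    (hB : ∀ x, |deriv f x| ≤ B) (a b : ℝ) : |f a - f b| ≤ B * |a - b| := by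
  have := Convex.norm_image_sub_le_of_norm_deriv_le (f := f) (C := B)
      (fun x _ => hf x)
      (fun x _ => by rw [Real.norm_eq_abs]; exact hB x) convex_univ
      (Set.mem_univ b) (Set.mem_univ a)
  simpa [Real.norm_eq_abs] using this

lemma sigma_facts {σ : ℝ → ℝ} (hσ : ContDiff ℝ 2 σ) {B : ℝ}
    (hσb : ∀ z, |σ z| ≤ B ∧ |deriv σ z| ≤ B ∧ |deriv (deriv σ) z| ≤ B) :
    (∀ a b, |σ a - σ b| ≤ B * |a - b|) ∧ (∀ a b, |deriv σ a - deriv σ b| ≤ B * |a - b|) := by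
  have h2 : ContDiff ℝ (1+1) σ := by norm_num; exact hσ
  have hd : Differentiable ℝ σ := hσ.differentiable (by norm_num)
  have hd2 : ContDiff ℝ 1 (deriv σ) := (contDiff_succ_iff_deriv.mp h2).2.2
  have hdd : Differentiable ℝ (deriv σ) := hd2.differentiable (by norm_num)
  exact ⟨lip_of_deriv_bound hd fun x => (hσb x).2.1,
    lip_of_deriv_bound hdd fun x => (hσb x).2.2⟩



lemma integrable_of_bound {α : Type*} [MeasurableSpace α] {μ : Measure α} [IsFiniteMeasure μ]
    {f : α → ℝ} (hm : AEStronglyMeasurable f μ) {C : ℝ} (h : ∀ᵐ a ∂μ, |f a| ≤ C) :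
    Integrable f μ :=
  ⟨hm, HasFiniteIntegral.of_bounded (C := C) (by simpa [Real.norm_eq_abs] using h)⟩

attribute [local fun_prop] Measurable.inner

section Diff
variable {d : ℕ} {σ : ℝ → ℝ} {μc : Measure ℝ} {μW1 : Measure (Euc d)} {μW2 : Measure ℝ}
  {Ca Cb : ℝ → ℝ → ℝ} {W1a W1b : ℝ → Euc d → Euc d} {W2a W2b : ℝ → ℝ → Euc d → ℝ → ℝ} {t : ℝ}
  {SC : Set ℝ} {SW1 : Set (Euc d)} {SW2 : Set ℝ} {B M R φ : ℝ}
  [IsProbabilityMeasure μc] [IsProbabilityMeasure μW1] [IsProbabilityMeasure μW2]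

lemma diff_limZ (hμ1 : μW1 SW1ᶜ = 0) (hμ2 : μW2 SW2ᶜ = 0)
    (hσc : Continuous σ) (hσB : ∀ z, |σ z| ≤ B) (hLσ : ∀ a b, |σ a - σ b| ≤ B * |a - b|)
    (hM : 0 ≤ M) (hφ : 0 ≤ φ) (hR : 0 ≤ R)
    (h1a : Measurable (W1a t)) (h2a : Measurable (fun q : ℝ × Euc d × ℝ => W2a t q.1 q.2.1 q.2.2))
    (h1b : Measurable (W1b t)) (h2b : Measurable (fun q : ℝ × Euc d × ℝ => W2b t q.1 q.2.1 q.2.2))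
    (hM2a : ∀ c ∈ SC, ∀ w ∈ SW1, ∀ u ∈ SW2, |W2a t c w u| ≤ M)
    (hM2b : ∀ c ∈ SC, ∀ w ∈ SW1, ∀ u ∈ SW2, |W2b t c w u| ≤ M)
    (hd1 : ∀ w ∈ SW1, ‖W1a t w - W1b t w‖ ≤ φ)
    (hd2 : ∀ c ∈ SC, ∀ w ∈ SW1, ∀ u ∈ SW2, |W2a t c w u - W2b t c w u| ≤ φ)
    {c : ℝ} (hc : c ∈ SC) {x : Euc d} (hxR : ‖x‖ ≤ R) :
    |limZ σ μW1 μW2 W1a W2a t c x - limZ σ μW1 μW2 W1b W2b t c x| ≤ (B + M*B*R)*φ := by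
  have hB : 0 ≤ B := (abs_nonneg _).trans (hσB 0)
  have hσm : Measurable σ := hσc.measurable
  have haeW1 := ae_mem_of_compl_null hμ1
  have haeW2 := ae_mem_of_compl_null hμ2
  have hsm : ∀ (W1 : ℝ → Euc d → Euc d) (W2 : ℝ → ℝ → Euc d → ℝ → ℝ),
      Measurable (W1 t) → Measurable (fun q : ℝ × Euc d × ℝ => W2 t q.1 q.2.1 q.2.2) →
      AEStronglyMeasurable (fun w => ∫ u, W2 t c w u * σ (⟪W1 t w, x⟫) ∂μW2) μW1 := by
    intro W1 W2 hm1 hm2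
    have : Measurable (fun r : Euc d × ℝ => W2 t c r.1 r.2 * σ (⟪W1 t r.1, x⟫)) := by fun_prop
    exact this.stronglyMeasurable.integral_prod_right'.aestronglyMeasurable
  have hbd : ∀ (W1 : ℝ → Euc d → Euc d) (W2 : ℝ → ℝ → Euc d → ℝ → ℝ),
      (∀ c ∈ SC, ∀ w ∈ SW1, ∀ u ∈ SW2, |W2 t c w u| ≤ M) →
      ∀ᵐ w ∂μW1, |∫ u, W2 t c w u * σ (⟪W1 t w, x⟫) ∂μW2| ≤ M * B := by
    intro W1 W2 hM2
    filter_upwards [haeW1] with w hw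
    apply abs_integral_le_of_ae
    filter_upwards [haeW2] with u hu
    exact abs_mul_le' (hM2 c hc w hw u hu) (hσB _)
  have hint₁ : Integrable (fun w => ∫ u, W2a t c w u * σ (⟪W1a t w, x⟫) ∂μW2) μW1 :=
    integrable_of_bound (hsm _ _ h1a h2a) (hbd _ _ hM2a)
  have hint₂ : Integrable (fun w => ∫ u, W2b t c w u * σ (⟪W1b t w, x⟫) ∂μW2) μW1 :=
    integrable_of_bound (hsm _ _ h1b h2b) (hbd _ _ hM2b)
  rw [limZ, limZ, ← integral_sub hint₁ hint₂]
  apply abs_integral_le_of_ae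
  filter_upwards [haeW1] with w hw
  have hfa : Integrable (fun u => W2a t c w u * σ (⟪W1a t w, x⟫)) μW2 := by
    apply integrable_of_bound (C := M * B)
    · have : Measurable (fun u => W2a t c w u * σ (⟪W1a t w, x⟫)) := by
        have := h2a.comp (f := fun u : ℝ => (c, w, u)) (by fun_prop)
        fun_prop
      exact this.aestronglyMeasurable
    · filter_upwards [haeW2] with u hu
      exact abs_mul_le' (hM2a c hc w hw u hu) (hσB _)
  have hfb : Integrable (fun u => W2b t c w u * σ (⟪W1b t w, x⟫)) μW2 := by
    apply integrable_of_bound (C := M * B)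
    · have : Measurable (fun u => W2b t c w u * σ (⟪W1b t w, x⟫)) := by
        have := h2b.comp (f := fun u : ℝ => (c, w, u)) (by fun_prop)
        fun_prop
      exact this.aestronglyMeasurable
    · filter_upwards [haeW2] with u hu
      exact abs_mul_le' (hM2b c hc w hw u hu) (hσB _)
  rw [← integral_sub hfa hfb]
  apply abs_integral_le_of_ae
  filter_upwards [haeW2] with u hu
  have hinner : |(⟪W1a t w, x⟫ : ℝ) - ⟪W1b t w, x⟫| ≤ φ * R := by
    rw [← inner_sub_left]
    exact (abs_real_inner_le_norm _ _).trans
      (mul_le_mul (hd1 w hw) hxR (norm_nonneg _) hφ)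
  have hσd : |σ (⟪W1a t w, x⟫) - σ (⟪W1b t w, x⟫)| ≤ B * (φ * R) :=
    (hLσ _ _).trans (mul_le_mul_of_nonneg_left hinner hB)
  calc |W2a t c w u * σ (⟪W1a t w, x⟫) - W2b t c w u * σ (⟪W1b t w, x⟫)|
      ≤ φ * B + M * (B * (φ * R)) :=
        abs_mul_sub_le' (hd2 c hc w hw u hu) (hσB _) (hM2b c hc w hw u hu) hσd
    _ = (B + M*B*R)*φ := by ring

lemma diff_J (hμ2 : μW2 SW2ᶜ = 0)
    (h2a : Measurable (fun q : ℝ × Euc d × ℝ => W2a t q.1 q.2.1 q.2.2))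
    (h2b : Measurable (fun q : ℝ × Euc d × ℝ => W2b t q.1 q.2.1 q.2.2))
    (hM : 0 ≤ M)
    (hM2a : ∀ c ∈ SC, ∀ w ∈ SW1, ∀ u ∈ SW2, |W2a t c w u| ≤ M)
    (hM2b : ∀ c ∈ SC, ∀ w ∈ SW1, ∀ u ∈ SW2, |W2b t c w u| ≤ M)
    (hd2 : ∀ c ∈ SC, ∀ w ∈ SW1, ∀ u ∈ SW2, |W2a t c w u - W2b t c w u| ≤ φ)
    {c : ℝ} (hc : c ∈ SC) {w : Euc d} (hw : w ∈ SW1) :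
    |(∫ u, W2a t c w u ∂μW2) - ∫ u, W2b t c w u ∂μW2| ≤ φ := by
  have haeW2 := ae_mem_of_compl_null hμ2
  have hfa : Integrable (fun u => W2a t c w u) μW2 := by
    apply integrable_of_bound (C := M)
    · exact (h2a.comp (f := fun u : ℝ => (c, w, u)) (by fun_prop)).aestronglyMeasurable
    · filter_upwards [haeW2] with u hu; exact hM2a c hc w hw u hu
  have hfb : Integrable (fun u => W2b t c w u) μW2 := by
    apply integrable_of_bound (C := M)
    · exact (h2b.comp (f := fun u : ℝ => (c, w, u)) (by fun_prop)).aestronglyMeasurable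
    · filter_upwards [haeW2] with u hu; exact hM2b c hc w hw u hu
  rw [← integral_sub hfa hfb]
  apply abs_integral_le_of_ae
  filter_upwards [haeW2] with u hu
  exact hd2 c hc w hw u hu

lemma diff_limG (hμc : μc SCᶜ = 0) (hμ1 : μW1 SW1ᶜ = 0) (hμ2 : μW2 SW2ᶜ = 0)
    (hσc : Continuous σ) (hσB : ∀ z, |σ z| ≤ B) (hLσ : ∀ a b, |σ a - σ b| ≤ B * |a - b|)
    (hM : 0 ≤ M) (hφ : 0 ≤ φ) (hR : 0 ≤ R)
    (hCa : Measurable (Ca t)) (hCb : Measurable (Cb t))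
    (h1a : Measurable (W1a t)) (h2a : Measurable (fun q : ℝ × Euc d × ℝ => W2a t q.1 q.2.1 q.2.2))
    (h1b : Measurable (W1b t)) (h2b : Measurable (fun q : ℝ × Euc d × ℝ => W2b t q.1 q.2.1 q.2.2))
    (hMca : ∀ c ∈ SC, |Ca t c| ≤ M) (hMcb : ∀ c ∈ SC, |Cb t c| ≤ M)
    (hM2a : ∀ c ∈ SC, ∀ w ∈ SW1, ∀ u ∈ SW2, |W2a t c w u| ≤ M)
    (hM2b : ∀ c ∈ SC, ∀ w ∈ SW1, ∀ u ∈ SW2, |W2b t c w u| ≤ M)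
    (hdC : ∀ c ∈ SC, |Ca t c - Cb t c| ≤ φ)
    (hd1 : ∀ w ∈ SW1, ‖W1a t w - W1b t w‖ ≤ φ)
    (hd2 : ∀ c ∈ SC, ∀ w ∈ SW1, ∀ u ∈ SW2, |W2a t c w u - W2b t c w u| ≤ φ)
    {x : Euc d} (hxR : ‖x‖ ≤ R) :
    |limG σ μc μW1 μW2 Ca W1a W2a t x - limG σ μc μW1 μW2 Cb W1b W2b t x|
      ≤ (B + M*B*(B + M*B*R))*φ := by
  have hB : 0 ≤ B := (abs_nonneg _).trans (hσB 0)
  have hσm : Measurable σ := hσc.measurable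
  have haec := ae_mem_of_compl_null hμc
  have hZa := measurable_limZ (σ := σ) (μW1 := μW1) (μW2 := μW2) (t := t) hσc h1a h2a
  have hZb := measurable_limZ (σ := σ) (μW1 := μW1) (μW2 := μW2) (t := t) hσc h1b h2b
  have hinta : Integrable (fun c => Ca t c * σ (limZ σ μW1 μW2 W1a W2a t c x)) μc := by
    apply integrable_of_bound (C := M * B)
    · have hZax : Measurable (fun c => limZ σ μW1 μW2 W1a W2a t c x) :=
        hZa.comp (f := fun c : ℝ => (c, x)) (by fun_prop)
      exact (hCa.mul (hσm.comp hZax)).aestronglyMeasurable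
    · filter_upwards [haec] with c hc
      exact abs_mul_le' (hMca c hc) (hσB _)
  have hintb : Integrable (fun c => Cb t c * σ (limZ σ μW1 μW2 W1b W2b t c x)) μc := by
    apply integrable_of_bound (C := M * B)
    · have hZbx : Measurable (fun c => limZ σ μW1 μW2 W1b W2b t c x) :=
        hZb.comp (f := fun c : ℝ => (c, x)) (by fun_prop)
      exact (hCb.mul (hσm.comp hZbx)).aestronglyMeasurable
    · filter_upwards [haec] with c hc
      exact abs_mul_le' (hMcb c hc) (hσB _)
  rw [limG, limG, ← integral_sub hinta hintb]
  apply abs_integral_le_of_ae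
  filter_upwards [haec] with c hc
  have hdZ := diff_limZ hμ1 hμ2 hσc hσB hLσ hM hφ hR h1a h2a h1b h2b hM2a hM2b hd1 hd2 hc hxR
  have hσd : |σ (limZ σ μW1 μW2 W1a W2a t c x) - σ (limZ σ μW1 μW2 W1b W2b t c x)|
      ≤ B * ((B + M*B*R)*φ) :=
    (hLσ _ _).trans (mul_le_mul_of_nonneg_left hdZ hB)
  calc |Ca t c * σ (limZ σ μW1 μW2 W1a W2a t c x) - Cb t c * σ (limZ σ μW1 μW2 W1b W2b t c x)|
      ≤ φ * B + M * (B * ((B + M*B*R)*φ)) :=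
        abs_mul_sub_le' (hdC c hc) (hσB _) (hMcb c hc) hσd
    _ = (B + M*B*(B + M*B*R))*φ := by ring

lemma diff_limV (hμc : μc SCᶜ = 0) (hμ1 : μW1 SW1ᶜ = 0) (hμ2 : μW2 SW2ᶜ = 0)
    (hσc : Continuous σ) (hσc' : Continuous (deriv σ))
    (hσB : ∀ z, |σ z| ≤ B) (hσB' : ∀ z, |deriv σ z| ≤ B)
    (hLσ : ∀ a b, |σ a - σ b| ≤ B * |a - b|)
    (hLσ' : ∀ a b, |deriv σ a - deriv σ b| ≤ B * |a - b|)
    (hM : 0 ≤ M) (hφ : 0 ≤ φ) (hR : 0 ≤ R)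
    (hCa : Measurable (Ca t)) (hCb : Measurable (Cb t))
    (h1a : Measurable (W1a t)) (h2a : Measurable (fun q : ℝ × Euc d × ℝ => W2a t q.1 q.2.1 q.2.2))
    (h1b : Measurable (W1b t)) (h2b : Measurable (fun q : ℝ × Euc d × ℝ => W2b t q.1 q.2.1 q.2.2))
    (hMca : ∀ c ∈ SC, |Ca t c| ≤ M) (hMcb : ∀ c ∈ SC, |Cb t c| ≤ M)
    (hM2a : ∀ c ∈ SC, ∀ w ∈ SW1, ∀ u ∈ SW2, |W2a t c w u| ≤ M)
    (hM2b : ∀ c ∈ SC, ∀ w ∈ SW1, ∀ u ∈ SW2, |W2b t c w u| ≤ M)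
    (hdC : ∀ c ∈ SC, |Ca t c - Cb t c| ≤ φ)
    (hd1 : ∀ w ∈ SW1, ‖W1a t w - W1b t w‖ ≤ φ)
    (hd2 : ∀ c ∈ SC, ∀ w ∈ SW1, ∀ u ∈ SW2, |W2a t c w u - W2b t c w u| ≤ φ)
    {w : Euc d} (hw : w ∈ SW1) {x : Euc d} (hxR : ‖x‖ ≤ R) :
    |limV σ μc μW1 μW2 Ca W1a W2a t w x - limV σ μc μW1 μW2 Cb W1b W2b t w x|
      ≤ ((B + M*B*(B + M*B*R))*M + M*B)*φ := by
  have hB : 0 ≤ B := (abs_nonneg _).trans (hσB 0)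
  have hσm : Measurable σ := hσc.measurable
  have hσm' : Measurable (deriv σ) := hσc'.measurable
  have haec := ae_mem_of_compl_null hμc
  have hZa := measurable_limZ (σ := σ) (μW1 := μW1) (μW2 := μW2) (t := t) hσc h1a h2a
  have hZb := measurable_limZ (σ := σ) (μW1 := μW1) (μW2 := μW2) (t := t) hσc h1b h2b
  have hJa := measurable_J (μW2 := μW2) (t := t) h2a
  have hJb := measurable_J (μW2 := μW2) (t := t) h2b
  have hinta : Integrable (fun c => Ca t c * deriv σ (limZ σ μW1 μW2 W1a W2a t c x) *
      (∫ u, W2a t c w u ∂μW2)) μc := by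
    apply integrable_of_bound (C := M * B * M)
    · have hZax : Measurable (fun c => limZ σ μW1 μW2 W1a W2a t c x) :=
        hZa.comp (f := fun c : ℝ => (c, x)) (by fun_prop)
      have hJax : Measurable (fun c => ∫ u, W2a t c w u ∂μW2) :=
        hJa.comp (f := fun c : ℝ => (c, w)) (by fun_prop)
      exact ((hCa.mul (hσm'.comp hZax)).mul hJax).aestronglyMeasurable
    · filter_upwards [haec] with c hc
      exact abs_mul_le' (abs_mul_le' (hMca c hc) (hσB' _)) (bound_J hμ2 hM2a hc hw)
  have hintb : Integrable (fun c => Cb t c * deriv σ (limZ σ μW1 μW2 W1b W2b t c x) *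
      (∫ u, W2b t c w u ∂μW2)) μc := by
    apply integrable_of_bound (C := M * B * M)
    · have hZbx : Measurable (fun c => limZ σ μW1 μW2 W1b W2b t c x) :=
        hZb.comp (f := fun c : ℝ => (c, x)) (by fun_prop)
      have hJbx : Measurable (fun c => ∫ u, W2b t c w u ∂μW2) :=
        hJb.comp (f := fun c : ℝ => (c, w)) (by fun_prop)
      exact ((hCb.mul (hσm'.comp hZbx)).mul hJbx).aestronglyMeasurable
    · filter_upwards [haec] with c hc
      exact abs_mul_le' (abs_mul_le' (hMcb c hc) (hσB' _)) (bound_J hμ2 hM2b hc hw)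
  rw [limV, limV, ← integral_sub hinta hintb]
  apply abs_integral_le_of_ae
  filter_upwards [haec] with c hc
  have hdZ := diff_limZ hμ1 hμ2 hσc hσB hLσ hM hφ hR h1a h2a h1b h2b hM2a hM2b hd1 hd2 hc hxR
  have hσd : |deriv σ (limZ σ μW1 μW2 W1a W2a t c x) - deriv σ (limZ σ μW1 μW2 W1b W2b t c x)|
      ≤ B * ((B + M*B*R)*φ) :=
    (hLσ' _ _).trans (mul_le_mul_of_nonneg_left hdZ hB)
  have hfront : |Ca t c * deriv σ (limZ σ μW1 μW2 W1a W2a t c x) -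
      Cb t c * deriv σ (limZ σ μW1 μW2 W1b W2b t c x)| ≤ φ * B + M * (B * ((B + M*B*R)*φ)) :=
    abs_mul_sub_le' (hdC c hc) (hσB' _) (hMcb c hc) hσd
  have hdJ := diff_J (W2a := W2a) (W2b := W2b) hμ2 h2a h2b hM hM2a hM2b hd2 hc hw
  calc |Ca t c * deriv σ (limZ σ μW1 μW2 W1a W2a t c x) * (∫ u, W2a t c w u ∂μW2) -
      Cb t c * deriv σ (limZ σ μW1 μW2 W1b W2b t c x) * (∫ u, W2b t c w u ∂μW2)|
      ≤ (φ * B + M * (B * ((B + M*B*R)*φ))) * M + (M * B) * φ :=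
        abs_mul_sub_le' hfront (bound_J hμ2 hM2a hc hw)
          (abs_mul_le' (hMcb c hc) (hσB' _)) hdJ
    _ = ((B + M*B*(B + M*B*R))*M + M*B)*φ := by ring
end Diff



attribute [local fun_prop] Measurable.inner

section Cont
variable {d : ℕ} {σ : ℝ → ℝ} {π : Measure (Euc d × ℝ)} {μc : Measure ℝ}
  {μW1 : Measure (Euc d)} {μW2 : Measure ℝ}
  {Ct : ℝ → ℝ → ℝ} {W1t : ℝ → Euc d → Euc d} {W2t : ℝ → ℝ → Euc d → ℝ → ℝ}
  {SX : Set (Euc d)} {SY SC : Set ℝ} {SW1 : Set (Euc d)} {SW2 : Set ℝ} {B M R Y : ℝ}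
  [IsProbabilityMeasure π] [IsProbabilityMeasure μc]
  [IsProbabilityMeasure μW1] [IsProbabilityMeasure μW2]

lemma cont_limZ (hμ1 : μW1 SW1ᶜ = 0) (hμ2 : μW2 SW2ᶜ = 0)
    (hσc : Continuous σ) (hσB : ∀ z, |σ z| ≤ B)
    (hcW1 : ∀ w ∈ SW1, ContinuousOn (fun t => W1t t w) (Set.Icc 0 1))
    (hcW2 : ∀ c ∈ SC, ∀ w ∈ SW1, ∀ u ∈ SW2, ContinuousOn (fun t => W2t t c w u) (Set.Icc 0 1))
    (hm1 : ∀ s, Measurable (W1t s))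
    (hm2 : ∀ s, Measurable (fun q : ℝ × Euc d × ℝ => W2t s q.1 q.2.1 q.2.2))
    (hM2 : ∀ s ∈ Set.Icc (0:ℝ) 1, ∀ c ∈ SC, ∀ w ∈ SW1, ∀ u ∈ SW2, |W2t s c w u| ≤ M)
    {c : ℝ} (hc : c ∈ SC) (x : Euc d) :
    ContinuousOn (fun s => limZ σ μW1 μW2 W1t W2t s c x) (Set.Icc 0 1) := by
  have hσm : Measurable σ := hσc.measurable
  have haeW1 := ae_mem_of_compl_null hμ1
  have haeW2 := ae_mem_of_compl_null hμ2
  simp only [limZ]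
  apply continuousOn_of_dominated (bound := fun _ => M * B)
  · intro s _
    have h1 := hm1 s; have h2 := hm2 s
    have : Measurable (fun r : Euc d × ℝ => W2t s c r.1 r.2 * σ (⟪W1t s r.1, x⟫)) := by
      fun_prop
    exact this.stronglyMeasurable.integral_prod_right'.aestronglyMeasurable
  · intro s hs
    filter_upwards [haeW1] with w hw
    rw [Real.norm_eq_abs]
    apply abs_integral_le_of_ae
    filter_upwards [haeW2] with u hu
    exact abs_mul_le' (hM2 s hs c hc w hw u hu) (hσB _)
  · exact integrable_const _
  · filter_upwards [haeW1] with w hw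
    apply continuousOn_of_dominated (bound := fun _ => M * B)
    · intro s _
      have h2 := (hm2 s).comp (f := fun u : ℝ => (c, w, u)) (by fun_prop)
      have : Measurable (fun u => W2t s c w u * σ (⟪W1t s w, x⟫)) := by fun_prop
      exact this.aestronglyMeasurable
    · intro s hs
      filter_upwards [haeW2] with u hu
      rw [Real.norm_eq_abs]
      exact abs_mul_le' (hM2 s hs c hc w hw u hu) (hσB _)
    · exact integrable_const _
    · filter_upwards [haeW2] with u hu
      exact (hcW2 c hc w hw u hu).mul
        (hσc.comp_continuousOn ((hcW1 w hw).inner continuousOn_const))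

lemma cont_J (hμ2 : μW2 SW2ᶜ = 0)
    (hcW2 : ∀ c ∈ SC, ∀ w ∈ SW1, ∀ u ∈ SW2, ContinuousOn (fun t => W2t t c w u) (Set.Icc 0 1))
    (hm2 : ∀ s, Measurable (fun q : ℝ × Euc d × ℝ => W2t s q.1 q.2.1 q.2.2))
    (hM2 : ∀ s ∈ Set.Icc (0:ℝ) 1, ∀ c ∈ SC, ∀ w ∈ SW1, ∀ u ∈ SW2, |W2t s c w u| ≤ M)
    {c : ℝ} (hc : c ∈ SC) {w : Euc d} (hw : w ∈ SW1) :
    ContinuousOn (fun s => ∫ u, W2t s c w u ∂μW2) (Set.Icc 0 1) := by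
  have haeW2 := ae_mem_of_compl_null hμ2
  apply continuousOn_of_dominated (bound := fun _ => M)
  · intro s _
    exact ((hm2 s).comp (f := fun u : ℝ => (c, w, u)) (by fun_prop)).aestronglyMeasurable
  · intro s hs
    filter_upwards [haeW2] with u hu
    rw [Real.norm_eq_abs]; exact hM2 s hs c hc w hw u hu
  · exact integrable_const _
  · filter_upwards [haeW2] with u hu
    exact hcW2 c hc w hw u hu

lemma cont_limG (hμc : μc SCᶜ = 0) (hμ1 : μW1 SW1ᶜ = 0) (hμ2 : μW2 SW2ᶜ = 0)
    (hσc : Continuous σ) (hσB : ∀ z, |σ z| ≤ B)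
    (hcC : ∀ c ∈ SC, ContinuousOn (fun t => Ct t c) (Set.Icc 0 1))
    (hcW1 : ∀ w ∈ SW1, ContinuousOn (fun t => W1t t w) (Set.Icc 0 1))
    (hcW2 : ∀ c ∈ SC, ∀ w ∈ SW1, ∀ u ∈ SW2, ContinuousOn (fun t => W2t t c w u) (Set.Icc 0 1))
    (hmC : ∀ s, Measurable (Ct s)) (hm1 : ∀ s, Measurable (W1t s))
    (hm2 : ∀ s, Measurable (fun q : ℝ × Euc d × ℝ => W2t s q.1 q.2.1 q.2.2))
    (hMc : ∀ s ∈ Set.Icc (0:ℝ) 1, ∀ c ∈ SC, |Ct s c| ≤ M)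
    (hM2 : ∀ s ∈ Set.Icc (0:ℝ) 1, ∀ c ∈ SC, ∀ w ∈ SW1, ∀ u ∈ SW2, |W2t s c w u| ≤ M)
    (x : Euc d) :
    ContinuousOn (fun s => limG σ μc μW1 μW2 Ct W1t W2t s x) (Set.Icc 0 1) := by
  have hσm : Measurable σ := hσc.measurable
  have haec := ae_mem_of_compl_null hμc
  simp only [limG]
  apply continuousOn_of_dominated (bound := fun _ => M * B)
  · intro s _
    have hZx : Measurable (fun c => limZ σ μW1 μW2 W1t W2t s c x) :=
      (measurable_limZ hσc (hm1 s) (hm2 s)).comp (f := fun c : ℝ => (c, x)) (by fun_prop)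
    exact ((hmC s).mul (hσm.comp hZx)).aestronglyMeasurable
  · intro s hs
    filter_upwards [haec] with c hc
    rw [Real.norm_eq_abs]
    exact abs_mul_le' (hMc s hs c hc) (hσB _)
  · exact integrable_const _
  · filter_upwards [haec] with c hc
    exact (hcC c hc).mul (hσc.comp_continuousOn
      (cont_limZ hμ1 hμ2 hσc hσB hcW1 hcW2 hm1 hm2 hM2 hc x))

lemma cont_limV (hμc : μc SCᶜ = 0) (hμ1 : μW1 SW1ᶜ = 0) (hμ2 : μW2 SW2ᶜ = 0)
    (hσc : Continuous σ) (hσc' : Continuous (deriv σ))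
    (hσB : ∀ z, |σ z| ≤ B) (hσB' : ∀ z, |deriv σ z| ≤ B)
    (hcC : ∀ c ∈ SC, ContinuousOn (fun t => Ct t c) (Set.Icc 0 1))
    (hcW1 : ∀ w ∈ SW1, ContinuousOn (fun t => W1t t w) (Set.Icc 0 1))
    (hcW2 : ∀ c ∈ SC, ∀ w ∈ SW1, ∀ u ∈ SW2, ContinuousOn (fun t => W2t t c w u) (Set.Icc 0 1))
    (hmC : ∀ s, Measurable (Ct s)) (hm1 : ∀ s, Measurable (W1t s))
    (hm2 : ∀ s, Measurable (fun q : ℝ × Euc d × ℝ => W2t s q.1 q.2.1 q.2.2))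
    (hMc : ∀ s ∈ Set.Icc (0:ℝ) 1, ∀ c ∈ SC, |Ct s c| ≤ M)
    (hM2 : ∀ s ∈ Set.Icc (0:ℝ) 1, ∀ c ∈ SC, ∀ w ∈ SW1, ∀ u ∈ SW2, |W2t s c w u| ≤ M)
    (hM : 0 ≤ M)
    {w : Euc d} (hw : w ∈ SW1) (x : Euc d) :
    ContinuousOn (fun s => limV σ μc μW1 μW2 Ct W1t W2t s w x) (Set.Icc 0 1) := by
  have hσm' : Measurable (deriv σ) := hσc'.measurable
  have haec := ae_mem_of_compl_null hμc
  simp only [limV]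
  apply continuousOn_of_dominated (bound := fun _ => M * B * M)
  · intro s _
    have hZx : Measurable (fun c => limZ σ μW1 μW2 W1t W2t s c x) :=
      (measurable_limZ hσc (hm1 s) (hm2 s)).comp (f := fun c : ℝ => (c, x)) (by fun_prop)
    have hJx : Measurable (fun c => ∫ u, W2t s c w u ∂μW2) :=
      (measurable_J (hm2 s)).comp (f := fun c : ℝ => (c, w)) (by fun_prop)
    exact (((hmC s).mul (hσm'.comp hZx)).mul hJx).aestronglyMeasurable
  · intro s hs
    filter_upwards [haec] with c hc
    rw [Real.norm_eq_abs]
    exact abs_mul_le' (abs_mul_le' (hMc s hs c hc) (hσB' _)) (bound_J hμ2 (hM2 s hs) hc hw)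
  · exact integrable_const _
  · filter_upwards [haec] with c hc
    exact ((hcC c hc).mul (hσc'.comp_continuousOn
        (cont_limZ hμ1 hμ2 hσc hσB hcW1 hcW2 hm1 hm2 hM2 hc x))).mul
      (cont_J hμ2 hcW2 hm2 hM2 hc hw)
end Cont



attribute [local fun_prop] Measurable.inner

lemma abs_sub_le' {a b A B' : ℝ} (ha : |a| ≤ A) (hb : |b| ≤ B') : |a - b| ≤ A + B' :=
  (abs_sub _ _).trans (add_le_add ha hb)

section ContF
variable {d : ℕ} {σ : ℝ → ℝ} {π : Measure (Euc d × ℝ)} {μc : Measure ℝ}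
  {μW1 : Measure (Euc d)} {μW2 : Measure ℝ}
  {Ct : ℝ → ℝ → ℝ} {W1t : ℝ → Euc d → Euc d} {W2t : ℝ → ℝ → Euc d → ℝ → ℝ}
  {SX : Set (Euc d)} {SY SC : Set ℝ} {SW1 : Set (Euc d)} {SW2 : Set ℝ} {B M R Y : ℝ}
  [IsProbabilityMeasure π] [IsProbabilityMeasure μc]
  [IsProbabilityMeasure μW1] [IsProbabilityMeasure μW2]

variable (hπs : π ((SX ×ˢ SY)ᶜ) = 0) (hμc : μc SCᶜ = 0) (hμ1 : μW1 SW1ᶜ = 0) (hμ2 : μW2 SW2ᶜ = 0)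
  (hσc : Continuous σ) (hσc' : Continuous (deriv σ))
  (hσB : ∀ z, |σ z| ≤ B) (hσB' : ∀ z, |deriv σ z| ≤ B)
  (hcC : ∀ c ∈ SC, ContinuousOn (fun t => Ct t c) (Set.Icc 0 1))
  (hcW1 : ∀ w ∈ SW1, ContinuousOn (fun t => W1t t w) (Set.Icc 0 1))
  (hcW2 : ∀ c ∈ SC, ∀ w ∈ SW1, ∀ u ∈ SW2, ContinuousOn (fun t => W2t t c w u) (Set.Icc 0 1))
  (hmC : ∀ s, Measurable (Ct s)) (hm1 : ∀ s, Measurable (W1t s))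
  (hm2 : ∀ s, Measurable (fun q : ℝ × Euc d × ℝ => W2t s q.1 q.2.1 q.2.2))
  (hMc : ∀ s ∈ Set.Icc (0:ℝ) 1, ∀ c ∈ SC, |Ct s c| ≤ M)
  (hM1 : ∀ s ∈ Set.Icc (0:ℝ) 1, ∀ w ∈ SW1, ‖W1t s w‖ ≤ M)
  (hM2 : ∀ s ∈ Set.Icc (0:ℝ) 1, ∀ c ∈ SC, ∀ w ∈ SW1, ∀ u ∈ SW2, |W2t s c w u| ≤ M)
  (hM : 0 ≤ M) (hYb : ∀ y ∈ SY, |y| ≤ Y) (hXR : ∀ x ∈ SX, ‖x‖ ≤ R)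

include hπs hμc hμ1 hμ2 hσc hσB hcC hcW1 hcW2 hmC hm1 hm2 hMc hM2 hM hYb in
lemma cont_FC {c : ℝ} (hc : c ∈ SC) :
    ContinuousOn (fun s => ∫ p, (p.2 - limG σ μc μW1 μW2 Ct W1t W2t s p.1) *
      σ (limZ σ μW1 μW2 W1t W2t s c p.1) ∂π) (Set.Icc 0 1) := by
  have hσm : Measurable σ := hσc.measurable
  have haeπ := ae_mem_of_compl_null hπs
  apply continuousOn_of_dominated (bound := fun _ => (Y + M*B)*B)
  · intro s _
    have hG : Measurable (fun p : Euc d × ℝ => limG σ μc μW1 μW2 Ct W1t W2t s p.1) :=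
      (measurable_limG hσc (hmC s) (hm1 s) (hm2 s)).comp measurable_fst
    have hZx : Measurable (fun p : Euc d × ℝ => limZ σ μW1 μW2 W1t W2t s c p.1) :=
      (measurable_limZ hσc (hm1 s) (hm2 s)).comp
        (f := fun p : Euc d × ℝ => (c, p.1)) (by fun_prop)
    exact ((measurable_snd.sub hG).mul (hσm.comp hZx)).aestronglyMeasurable
  · intro s hs
    filter_upwards [haeπ] with p hp
    rw [Set.mem_prod] at hp
    rw [Real.norm_eq_abs]
    exact abs_mul_le' (abs_sub_le' (hYb _ hp.2)
      (bound_limG hμc hμ1 hμ2 hσB (hMc s hs) p.1)) (hσB _)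
  · exact integrable_const _
  · refine Filter.Eventually.of_forall (fun p => ?_)
    exact (continuousOn_const.sub
        (cont_limG hμc hμ1 hμ2 hσc hσB hcC hcW1 hcW2 hmC hm1 hm2 hMc hM2 p.1)).mul
      (hσc.comp_continuousOn (cont_limZ hμ1 hμ2 hσc hσB hcW1 hcW2 hm1 hm2 hM2 hc p.1))

include hπs hμc hμ1 hμ2 hσc hσc' hσB hσB' hcC hcW1 hcW2 hmC hm1 hm2 hMc hM2 hM hYb hXR in
lemma cont_FW1 {w : Euc d} (hw : w ∈ SW1) :
    ContinuousOn (fun s => ∫ p, ((p.2 - limG σ μc μW1 μW2 Ct W1t W2t s p.1) *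
      limV σ μc μW1 μW2 Ct W1t W2t s w p.1 *
      deriv σ (⟪W1t s w, p.1⟫)) • p.1 ∂π) (Set.Icc 0 1) := by
  have hσm : Measurable σ := hσc.measurable
  have hσm' : Measurable (deriv σ) := hσc'.measurable
  have haeπ := ae_mem_of_compl_null hπs
  apply continuousOn_of_dominated (bound := fun _ => (Y + M*B)*(M*B*M)*B*R)
  · intro s _
    have hG : Measurable (fun p : Euc d × ℝ => limG σ μc μW1 μW2 Ct W1t W2t s p.1) :=
      (measurable_limG hσc (hmC s) (hm1 s) (hm2 s)).comp measurable_fst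
    have hV : Measurable (fun p : Euc d × ℝ => limV σ μc μW1 μW2 Ct W1t W2t s w p.1) :=
      (measurable_limV hσc' hσc (hmC s) (hm1 s) (hm2 s)).comp
        (f := fun p : Euc d × ℝ => (w, p.1)) (by fun_prop)
    have hsc : Measurable (fun p : Euc d × ℝ =>
        (p.2 - limG σ μc μW1 μW2 Ct W1t W2t s p.1) * limV σ μc μW1 μW2 Ct W1t W2t s w p.1 *
          deriv σ (⟪W1t s w, p.1⟫)) := by fun_prop
    exact (hsc.smul measurable_fst).aestronglyMeasurable
  · intro s hs
    filter_upwards [haeπ] with p hp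
    rw [Set.mem_prod] at hp
    rw [norm_smul, Real.norm_eq_abs]
    have h1 : |(p.2 - limG σ μc μW1 μW2 Ct W1t W2t s p.1) *
        limV σ μc μW1 μW2 Ct W1t W2t s w p.1 * deriv σ (⟪W1t s w, p.1⟫)|
        ≤ (Y + M*B)*(M*B*M)*B :=
      abs_mul_le' (abs_mul_le' (abs_sub_le' (hYb _ hp.2)
        (bound_limG hμc hμ1 hμ2 hσB (hMc s hs) p.1))
        (bound_limV hμc hμ2 hσB' hM (hMc s hs) (hM2 s hs) hw p.1)) (hσB' _)
    have hA : (0:ℝ) ≤ (Y + M*B)*(M*B*M)*B := le_trans (abs_nonneg _) h1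
    exact mul_le_mul h1 (hXR _ hp.1) (norm_nonneg _) hA
  · exact integrable_const _
  · refine Filter.Eventually.of_forall (fun p => ?_)
    exact (((continuousOn_const.sub
        (cont_limG hμc hμ1 hμ2 hσc hσB hcC hcW1 hcW2 hmC hm1 hm2 hMc hM2 p.1)).mul
      (cont_limV hμc hμ1 hμ2 hσc hσc' hσB hσB' hcC hcW1 hcW2 hmC hm1 hm2 hMc hM2 hM hw p.1)).mul
      (hσc'.comp_continuousOn ((hcW1 w hw).inner continuousOn_const))).smul continuousOn_const

include hπs hμc hμ1 hμ2 hσc hσc' hσB hσB' hcC hcW1 hcW2 hmC hm1 hm2 hMc hM2 hM hYb in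
lemma cont_FW2 {c : ℝ} (hc : c ∈ SC) {w : Euc d} (hw : w ∈ SW1) :
    ContinuousOn (fun s => ∫ p, (p.2 - limG σ μc μW1 μW2 Ct W1t W2t s p.1) * Ct s c *
      deriv σ (limZ σ μW1 μW2 W1t W2t s c p.1) * σ (⟪W1t s w, p.1⟫) ∂π) (Set.Icc 0 1) := by
  have hσm : Measurable σ := hσc.measurable
  have hσm' : Measurable (deriv σ) := hσc'.measurable
  have haeπ := ae_mem_of_compl_null hπs
  apply continuousOn_of_dominated (bound := fun _ => (Y + M*B)*M*B*B)
  · intro s _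
    have hG : Measurable (fun p : Euc d × ℝ => limG σ μc μW1 μW2 Ct W1t W2t s p.1) :=
      (measurable_limG hσc (hmC s) (hm1 s) (hm2 s)).comp measurable_fst
    have hZx : Measurable (fun p : Euc d × ℝ => limZ σ μW1 μW2 W1t W2t s c p.1) :=
      (measurable_limZ hσc (hm1 s) (hm2 s)).comp
        (f := fun p : Euc d × ℝ => (c, p.1)) (by fun_prop)
    exact ((((measurable_snd.sub hG).mul measurable_const).mul (hσm'.comp hZx)).mul
      (hσm.comp ((measurable_const.inner measurable_fst)))).aestronglyMeasurable
  · intro s hs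
    filter_upwards [haeπ] with p hp
    rw [Set.mem_prod] at hp
    rw [Real.norm_eq_abs]
    exact abs_mul_le' (abs_mul_le' (abs_mul_le' (abs_sub_le' (hYb _ hp.2)
      (bound_limG hμc hμ1 hμ2 hσB (hMc s hs) p.1)) (hMc s hs c hc)) (hσB' _)) (hσB _)
  · exact integrable_const _
  · refine Filter.Eventually.of_forall (fun p => ?_)
    exact (((continuousOn_const.sub
        (cont_limG hμc hμ1 hμ2 hσc hσB hcC hcW1 hcW2 hmC hm1 hm2 hMc hM2 p.1)).mul
      (hcC c hc)).mul (hσc'.comp_continuousOn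
        (cont_limZ hμ1 hμ2 hσc hσB hcW1 hcW2 hm1 hm2 hM2 hc p.1))).mul
      (hσc.comp_continuousOn ((hcW1 w hw).inner continuousOn_const))
end ContF



attribute [local fun_prop] Measurable.inner

lemma integrable_of_bound' {α E : Type*} [MeasurableSpace α] {μ : Measure α} [IsFiniteMeasure μ]
    [NormedAddCommGroup E] {f : α → E} (hm : AEStronglyMeasurable f μ) {C : ℝ}
    (h : ∀ᵐ a ∂μ, ‖f a‖ ≤ C) : Integrable f μ :=
  ⟨hm, HasFiniteIntegral.of_bounded h⟩

section DiffF
variable {d : ℕ} {σ : ℝ → ℝ} {π : Measure (Euc d × ℝ)} {μc : Measure ℝ}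
  {μW1 : Measure (Euc d)} {μW2 : Measure ℝ}
  {Ca Cb : ℝ → ℝ → ℝ} {W1a W1b : ℝ → Euc d → Euc d} {W2a W2b : ℝ → ℝ → Euc d → ℝ → ℝ}
  {SX : Set (Euc d)} {SY SC : Set ℝ} {SW1 : Set (Euc d)} {SW2 : Set ℝ} {B M R Y φ t : ℝ}
  [IsProbabilityMeasure π] [IsProbabilityMeasure μc]
  [IsProbabilityMeasure μW1] [IsProbabilityMeasure μW2]

variable (hπs : π ((SX ×ˢ SY)ᶜ) = 0) (hμc : μc SCᶜ = 0) (hμ1 : μW1 SW1ᶜ = 0) (hμ2 : μW2 SW2ᶜ = 0)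
  (hσc : Continuous σ) (hσc' : Continuous (deriv σ))
  (hσB : ∀ z, |σ z| ≤ B) (hσB' : ∀ z, |deriv σ z| ≤ B)
  (hLσ : ∀ a b, |σ a - σ b| ≤ B * |a - b|)
  (hLσ' : ∀ a b, |deriv σ a - deriv σ b| ≤ B * |a - b|)
  (hM : 0 ≤ M) (hφ : 0 ≤ φ) (hR : 0 ≤ R)
  (hCa : Measurable (Ca t)) (hCb : Measurable (Cb t))
  (h1a : Measurable (W1a t)) (h2a : Measurable (fun q : ℝ × Euc d × ℝ => W2a t q.1 q.2.1 q.2.2))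
  (h1b : Measurable (W1b t)) (h2b : Measurable (fun q : ℝ × Euc d × ℝ => W2b t q.1 q.2.1 q.2.2))
  (hMca : ∀ c ∈ SC, |Ca t c| ≤ M) (hMcb : ∀ c ∈ SC, |Cb t c| ≤ M)
  (hM2a : ∀ c ∈ SC, ∀ w ∈ SW1, ∀ u ∈ SW2, |W2a t c w u| ≤ M)
  (hM2b : ∀ c ∈ SC, ∀ w ∈ SW1, ∀ u ∈ SW2, |W2b t c w u| ≤ M)
  (hdC : ∀ c ∈ SC, |Ca t c - Cb t c| ≤ φ)
  (hd1 : ∀ w ∈ SW1, ‖W1a t w - W1b t w‖ ≤ φ)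
  (hd2 : ∀ c ∈ SC, ∀ w ∈ SW1, ∀ u ∈ SW2, |W2a t c w u - W2b t c w u| ≤ φ)
  (hYb : ∀ y ∈ SY, |y| ≤ Y) (hXR : ∀ x ∈ SX, ‖x‖ ≤ R)

include hπs hμc hμ1 hμ2 hσc hσB hLσ hM hφ hR hCa hCb h1a h2a h1b h2b hMca hMcb hM2a hM2b
  hdC hd1 hd2 hYb hXR in
lemma diff_FC {c : ℝ} (hc : c ∈ SC) :
    |(∫ p, (p.2 - limG σ μc μW1 μW2 Ca W1a W2a t p.1) *
        σ (limZ σ μW1 μW2 W1a W2a t c p.1) ∂π) -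
      ∫ p, (p.2 - limG σ μc μW1 μW2 Cb W1b W2b t p.1) *
        σ (limZ σ μW1 μW2 W1b W2b t c p.1) ∂π|
      ≤ ((B + M*B*(B + M*B*R))*B + (Y + M*B)*(B*(B + M*B*R)))*φ := by
  have hσm : Measurable σ := hσc.measurable
  have haeπ := ae_mem_of_compl_null hπs
  have hmint : ∀ (C' : ℝ → ℝ → ℝ) (W1 : ℝ → Euc d → Euc d) (W2 : ℝ → ℝ → Euc d → ℝ → ℝ),
      Measurable (C' t) → Measurable (W1 t) →
      Measurable (fun q : ℝ × Euc d × ℝ => W2 t q.1 q.2.1 q.2.2) →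
      (∀ c ∈ SC, |C' t c| ≤ M) →
      Integrable (fun p : Euc d × ℝ => (p.2 - limG σ μc μW1 μW2 C' W1 W2 t p.1) *
        σ (limZ σ μW1 μW2 W1 W2 t c p.1)) π := by
    intro C' W1 W2 hmC hmW1 hmW2 hMc'
    apply integrable_of_bound (C := (Y + M*B)*B)
    · have hG : Measurable (fun p : Euc d × ℝ => limG σ μc μW1 μW2 C' W1 W2 t p.1) :=
        (measurable_limG hσc hmC hmW1 hmW2).comp measurable_fst
      have hZx : Measurable (fun p : Euc d × ℝ => limZ σ μW1 μW2 W1 W2 t c p.1) :=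
        (measurable_limZ hσc hmW1 hmW2).comp (f := fun p : Euc d × ℝ => (c, p.1)) (by fun_prop)
      exact ((measurable_snd.sub hG).mul (hσm.comp hZx)).aestronglyMeasurable
    · filter_upwards [haeπ] with p hp
      rw [Set.mem_prod] at hp
      exact abs_mul_le' (abs_sub_le' (hYb _ hp.2)
        (bound_limG hμc hμ1 hμ2 hσB hMc' p.1)) (hσB _)
  rw [← integral_sub (hmint _ _ _ hCa h1a h2a hMca) (hmint _ _ _ hCb h1b h2b hMcb)]
  apply abs_integral_le_of_ae
  filter_upwards [haeπ] with p hp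
  rw [Set.mem_prod] at hp
  have hdG := diff_limG hμc hμ1 hμ2 hσc hσB hLσ hM hφ hR hCa hCb h1a h2a h1b h2b hMca hMcb
    hM2a hM2b hdC hd1 hd2 (hXR _ hp.1)
  have hdZ := diff_limZ hμ1 hμ2 hσc hσB hLσ hM hφ hR h1a h2a h1b h2b hM2a hM2b hd1 hd2
    hc (hXR _ hp.1)
  have d1 : |(p.2 - limG σ μc μW1 μW2 Ca W1a W2a t p.1) -
      (p.2 - limG σ μc μW1 μW2 Cb W1b W2b t p.1)| ≤ (B + M*B*(B + M*B*R))*φ := by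
    have e : (p.2 - limG σ μc μW1 μW2 Ca W1a W2a t p.1) -
        (p.2 - limG σ μc μW1 μW2 Cb W1b W2b t p.1) =
        -(limG σ μc μW1 μW2 Ca W1a W2a t p.1 - limG σ μc μW1 μW2 Cb W1b W2b t p.1) := by ring
    rw [e, abs_neg]; exact hdG
  calc |(p.2 - limG σ μc μW1 μW2 Ca W1a W2a t p.1) * σ (limZ σ μW1 μW2 W1a W2a t c p.1) -
      (p.2 - limG σ μc μW1 μW2 Cb W1b W2b t p.1) * σ (limZ σ μW1 μW2 W1b W2b t c p.1)|
      ≤ ((B + M*B*(B + M*B*R))*φ) * B + (Y + M*B) * (B * ((B + M*B*R)*φ)) :=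
        abs_mul_sub_le' d1 (hσB _)
          (abs_sub_le' (hYb _ hp.2) (bound_limG hμc hμ1 hμ2 hσB hMcb p.1))
          ((hLσ _ _).trans (mul_le_mul_of_nonneg_left hdZ ((abs_nonneg _).trans (hσB 0))))
    _ = ((B + M*B*(B + M*B*R))*B + (Y + M*B)*(B*(B + M*B*R)))*φ := by ring

include hπs hμc hμ1 hμ2 hσc hσc' hσB hσB' hLσ hLσ' hM hφ hR hCa hCb h1a h2a h1b h2b
  hMca hMcb hM2a hM2b hdC hd1 hd2 hYb hXR in
lemma diff_FW1 {w : Euc d} (hw : w ∈ SW1) :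
    ‖(∫ p, ((p.2 - limG σ μc μW1 μW2 Ca W1a W2a t p.1) *
        limV σ μc μW1 μW2 Ca W1a W2a t w p.1 * deriv σ (⟪W1a t w, p.1⟫)) • p.1 ∂π) -
      ∫ p, ((p.2 - limG σ μc μW1 μW2 Cb W1b W2b t p.1) *
        limV σ μc μW1 μW2 Cb W1b W2b t w p.1 * deriv σ (⟪W1b t w, p.1⟫)) • p.1 ∂π‖
      ≤ (((B + M*B*(B + M*B*R))*(M*B*M) +
          (Y + M*B)*((B + M*B*(B + M*B*R))*M + M*B))*B +
          (Y + M*B)*(M*B*M)*(B*R))*R*φ := by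
  have hσm : Measurable σ := hσc.measurable
  have hσm' : Measurable (deriv σ) := hσc'.measurable
  have hB : 0 ≤ B := (abs_nonneg _).trans (hσB 0)
  have haeπ := ae_mem_of_compl_null hπs
  have hmint : ∀ (C' : ℝ → ℝ → ℝ) (W1 : ℝ → Euc d → Euc d) (W2 : ℝ → ℝ → Euc d → ℝ → ℝ),
      Measurable (C' t) → Measurable (W1 t) →
      Measurable (fun q : ℝ × Euc d × ℝ => W2 t q.1 q.2.1 q.2.2) →
      (∀ c ∈ SC, |C' t c| ≤ M) → (∀ c ∈ SC, ∀ w' ∈ SW1, ∀ u ∈ SW2, |W2 t c w' u| ≤ M) →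
      Integrable (fun p : Euc d × ℝ => ((p.2 - limG σ μc μW1 μW2 C' W1 W2 t p.1) *
        limV σ μc μW1 μW2 C' W1 W2 t w p.1 * deriv σ (⟪W1 t w, p.1⟫)) • p.1) π := by
    intro C' W1 W2 hmC hmW1 hmW2 hMc' hM2'
    apply integrable_of_bound' (C := (Y + M*B)*(M*B*M)*B*R)
    · have hG : Measurable (fun p : Euc d × ℝ => limG σ μc μW1 μW2 C' W1 W2 t p.1) :=
        (measurable_limG hσc hmC hmW1 hmW2).comp measurable_fst
      have hV : Measurable (fun p : Euc d × ℝ => limV σ μc μW1 μW2 C' W1 W2 t w p.1) :=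
        (measurable_limV hσc' hσc hmC hmW1 hmW2).comp
          (f := fun p : Euc d × ℝ => (w, p.1)) (by fun_prop)
      have hsc : Measurable (fun p : Euc d × ℝ =>
          (p.2 - limG σ μc μW1 μW2 C' W1 W2 t p.1) * limV σ μc μW1 μW2 C' W1 W2 t w p.1 *
            deriv σ (⟪W1 t w, p.1⟫)) := by fun_prop
      exact (hsc.smul measurable_fst).aestronglyMeasurable
    · filter_upwards [haeπ] with p hp
      rw [Set.mem_prod] at hp
      rw [norm_smul, Real.norm_eq_abs]
      have h1 : |(p.2 - limG σ μc μW1 μW2 C' W1 W2 t p.1) *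
          limV σ μc μW1 μW2 C' W1 W2 t w p.1 * deriv σ (⟪W1 t w, p.1⟫)|
          ≤ (Y + M*B)*(M*B*M)*B :=
        abs_mul_le' (abs_mul_le' (abs_sub_le' (hYb _ hp.2)
          (bound_limG hμc hμ1 hμ2 hσB hMc' p.1))
          (bound_limV hμc hμ2 hσB' hM hMc' hM2' hw p.1)) (hσB' _)
      exact mul_le_mul h1 (hXR _ hp.1) (norm_nonneg _) (le_trans (abs_nonneg _) h1)
  rw [← integral_sub (hmint _ _ _ hCa h1a h2a hMca hM2a) (hmint _ _ _ hCb h1b h2b hMcb hM2b)]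
  apply norm_integral_le_of_ae
  filter_upwards [haeπ] with p hp
  rw [Set.mem_prod] at hp
  have hdG := diff_limG hμc hμ1 hμ2 hσc hσB hLσ hM hφ hR hCa hCb h1a h2a h1b h2b hMca hMcb
    hM2a hM2b hdC hd1 hd2 (hXR _ hp.1)
  have hdV := diff_limV hμc hμ1 hμ2 hσc hσc' hσB hσB' hLσ hLσ' hM hφ hR hCa hCb h1a h2a h1b h2b
    hMca hMcb hM2a hM2b hdC hd1 hd2 hw (hXR _ hp.1)
  have d1 : |(p.2 - limG σ μc μW1 μW2 Ca W1a W2a t p.1) -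
      (p.2 - limG σ μc μW1 μW2 Cb W1b W2b t p.1)| ≤ (B + M*B*(B + M*B*R))*φ := by
    have e : (p.2 - limG σ μc μW1 μW2 Ca W1a W2a t p.1) -
        (p.2 - limG σ μc μW1 μW2 Cb W1b W2b t p.1) =
        -(limG σ μc μW1 μW2 Ca W1a W2a t p.1 - limG σ μc μW1 μW2 Cb W1b W2b t p.1) := by ring
    rw [e, abs_neg]; exact hdG
  have hinner : |(⟪W1a t w, p.1⟫ : ℝ) - ⟪W1b t w, p.1⟫| ≤ φ * R := by
    rw [← inner_sub_left]
    exact (abs_real_inner_le_norm _ _).trans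
      (mul_le_mul (hd1 w hw) (hXR _ hp.1) (norm_nonneg _) hφ)
  have hstep1 : |(p.2 - limG σ μc μW1 μW2 Ca W1a W2a t p.1) *
      limV σ μc μW1 μW2 Ca W1a W2a t w p.1 -
      (p.2 - limG σ μc μW1 μW2 Cb W1b W2b t p.1) * limV σ μc μW1 μW2 Cb W1b W2b t w p.1|
      ≤ ((B + M*B*(B + M*B*R))*φ)*(M*B*M) +
        (Y + M*B)*(((B + M*B*(B + M*B*R))*M + M*B)*φ) :=
    abs_mul_sub_le' d1 (bound_limV hμc hμ2 hσB' hM hMca hM2a hw p.1)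
      (abs_sub_le' (hYb _ hp.2) (bound_limG hμc hμ1 hμ2 hσB hMcb p.1)) hdV
  have hstep2 : |(p.2 - limG σ μc μW1 μW2 Ca W1a W2a t p.1) *
      limV σ μc μW1 μW2 Ca W1a W2a t w p.1 * deriv σ (⟪W1a t w, p.1⟫) -
      (p.2 - limG σ μc μW1 μW2 Cb W1b W2b t p.1) *
      limV σ μc μW1 μW2 Cb W1b W2b t w p.1 * deriv σ (⟪W1b t w, p.1⟫)|
      ≤ (((B + M*B*(B + M*B*R))*φ)*(M*B*M) +
        (Y + M*B)*(((B + M*B*(B + M*B*R))*M + M*B)*φ))*B +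
        ((Y + M*B)*(M*B*M))*(B*(φ*R)) :=
    abs_mul_sub_le' hstep1 (hσB' _)
      (abs_mul_le' (abs_sub_le' (hYb _ hp.2) (bound_limG hμc hμ1 hμ2 hσB hMcb p.1))
        (bound_limV hμc hμ2 hσB' hM hMcb hM2b hw p.1))
      ((hLσ' _ _).trans (mul_le_mul_of_nonneg_left hinner hB))
  have e2 : ((p.2 - limG σ μc μW1 μW2 Ca W1a W2a t p.1) *
      limV σ μc μW1 μW2 Ca W1a W2a t w p.1 * deriv σ (⟪W1a t w, p.1⟫)) • p.1 -
      ((p.2 - limG σ μc μW1 μW2 Cb W1b W2b t p.1) *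
      limV σ μc μW1 μW2 Cb W1b W2b t w p.1 * deriv σ (⟪W1b t w, p.1⟫)) • p.1 =
      ((p.2 - limG σ μc μW1 μW2 Ca W1a W2a t p.1) *
      limV σ μc μW1 μW2 Ca W1a W2a t w p.1 * deriv σ (⟪W1a t w, p.1⟫) -
      (p.2 - limG σ μc μW1 μW2 Cb W1b W2b t p.1) *
      limV σ μc μW1 μW2 Cb W1b W2b t w p.1 * deriv σ (⟪W1b t w, p.1⟫)) • p.1 :=
    (sub_smul _ _ _).symm
  rw [e2, norm_smul, Real.norm_eq_abs]
  calc _ ≤ ((((B + M*B*(B + M*B*R))*φ)*(M*B*M) +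
        (Y + M*B)*(((B + M*B*(B + M*B*R))*M + M*B)*φ))*B +
        ((Y + M*B)*(M*B*M))*(B*(φ*R))) * R :=
      mul_le_mul hstep2 (hXR _ hp.1) (norm_nonneg _) (le_trans (abs_nonneg _) hstep2)
    _ = (((B + M*B*(B + M*B*R))*(M*B*M) +
        (Y + M*B)*((B + M*B*(B + M*B*R))*M + M*B))*B +
        (Y + M*B)*(M*B*M)*(B*R))*R*φ := by ring

include hπs hμc hμ1 hμ2 hσc hσc' hσB hσB' hLσ hLσ' hM hφ hR hCa hCb h1a h2a h1b h2b
  hMca hMcb hM2a hM2b hdC hd1 hd2 hYb hXR in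
lemma diff_FW2 {c : ℝ} (hc : c ∈ SC) {w : Euc d} (hw : w ∈ SW1) :
    |(∫ p, (p.2 - limG σ μc μW1 μW2 Ca W1a W2a t p.1) * Ca t c *
        deriv σ (limZ σ μW1 μW2 W1a W2a t c p.1) * σ (⟪W1a t w, p.1⟫) ∂π) -
      ∫ p, (p.2 - limG σ μc μW1 μW2 Cb W1b W2b t p.1) * Cb t c *
        deriv σ (limZ σ μW1 μW2 W1b W2b t c p.1) * σ (⟪W1b t w, p.1⟫) ∂π|
      ≤ ((((B + M*B*(B + M*B*R))*M + (Y + M*B))*B +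
          (Y + M*B)*M*(B*(B + M*B*R)))*B + (Y + M*B)*M*B*(B*R))*φ := by
  have hσm : Measurable σ := hσc.measurable
  have hσm' : Measurable (deriv σ) := hσc'.measurable
  have hB : 0 ≤ B := (abs_nonneg _).trans (hσB 0)
  have haeπ := ae_mem_of_compl_null hπs
  have hmint : ∀ (C' : ℝ → ℝ → ℝ) (W1 : ℝ → Euc d → Euc d) (W2 : ℝ → ℝ → Euc d → ℝ → ℝ),
      Measurable (C' t) → Measurable (W1 t) →
      Measurable (fun q : ℝ × Euc d × ℝ => W2 t q.1 q.2.1 q.2.2) →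
      (∀ c' ∈ SC, |C' t c'| ≤ M) →
      Integrable (fun p : Euc d × ℝ => (p.2 - limG σ μc μW1 μW2 C' W1 W2 t p.1) * C' t c *
        deriv σ (limZ σ μW1 μW2 W1 W2 t c p.1) * σ (⟪W1 t w, p.1⟫)) π := by
    intro C' W1 W2 hmC hmW1 hmW2 hMc'
    apply integrable_of_bound (C := (Y + M*B)*M*B*B)
    · have hG : Measurable (fun p : Euc d × ℝ => limG σ μc μW1 μW2 C' W1 W2 t p.1) :=
        (measurable_limG hσc hmC hmW1 hmW2).comp measurable_fst
      have hZx : Measurable (fun p : Euc d × ℝ => limZ σ μW1 μW2 W1 W2 t c p.1) :=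
        (measurable_limZ hσc hmW1 hmW2).comp (f := fun p : Euc d × ℝ => (c, p.1)) (by fun_prop)
      exact ((((measurable_snd.sub hG).mul measurable_const).mul (hσm'.comp hZx)).mul
        (hσm.comp ((measurable_const.inner measurable_fst)))).aestronglyMeasurable
    · filter_upwards [haeπ] with p hp
      rw [Set.mem_prod] at hp
      exact abs_mul_le' (abs_mul_le' (abs_mul_le' (abs_sub_le' (hYb _ hp.2)
        (bound_limG hμc hμ1 hμ2 hσB hMc' p.1)) (hMc' c hc)) (hσB' _)) (hσB _)
  rw [← integral_sub (hmint _ _ _ hCa h1a h2a hMca) (hmint _ _ _ hCb h1b h2b hMcb)]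
  apply abs_integral_le_of_ae
  filter_upwards [haeπ] with p hp
  rw [Set.mem_prod] at hp
  have hdG := diff_limG hμc hμ1 hμ2 hσc hσB hLσ hM hφ hR hCa hCb h1a h2a h1b h2b hMca hMcb
    hM2a hM2b hdC hd1 hd2 (hXR _ hp.1)
  have hdZ := diff_limZ hμ1 hμ2 hσc hσB hLσ hM hφ hR h1a h2a h1b h2b hM2a hM2b hd1 hd2
    hc (hXR _ hp.1)
  have d1 : |(p.2 - limG σ μc μW1 μW2 Ca W1a W2a t p.1) -
      (p.2 - limG σ μc μW1 μW2 Cb W1b W2b t p.1)| ≤ (B + M*B*(B + M*B*R))*φ := by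
    have e : (p.2 - limG σ μc μW1 μW2 Ca W1a W2a t p.1) -
        (p.2 - limG σ μc μW1 μW2 Cb W1b W2b t p.1) =
        -(limG σ μc μW1 μW2 Ca W1a W2a t p.1 - limG σ μc μW1 μW2 Cb W1b W2b t p.1) := by ring
    rw [e, abs_neg]; exact hdG
  have hinner : |(⟪W1a t w, p.1⟫ : ℝ) - ⟪W1b t w, p.1⟫| ≤ φ * R := by
    rw [← inner_sub_left]
    exact (abs_real_inner_le_norm _ _).trans
      (mul_le_mul (hd1 w hw) (hXR _ hp.1) (norm_nonneg _) hφ)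
  have hstep1 : |(p.2 - limG σ μc μW1 μW2 Ca W1a W2a t p.1) * Ca t c -
      (p.2 - limG σ μc μW1 μW2 Cb W1b W2b t p.1) * Cb t c|
      ≤ ((B + M*B*(B + M*B*R))*φ)*M + (Y + M*B)*φ :=
    abs_mul_sub_le' d1 (hMca c hc)
      (abs_sub_le' (hYb _ hp.2) (bound_limG hμc hμ1 hμ2 hσB hMcb p.1)) (hdC c hc)
  have hstep2 : |(p.2 - limG σ μc μW1 μW2 Ca W1a W2a t p.1) * Ca t c *
      deriv σ (limZ σ μW1 μW2 W1a W2a t c p.1) -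
      (p.2 - limG σ μc μW1 μW2 Cb W1b W2b t p.1) * Cb t c *
      deriv σ (limZ σ μW1 μW2 W1b W2b t c p.1)|
      ≤ (((B + M*B*(B + M*B*R))*φ)*M + (Y + M*B)*φ)*B +
        ((Y + M*B)*M)*(B*((B + M*B*R)*φ)) :=
    abs_mul_sub_le' hstep1 (hσB' _)
      (abs_mul_le' (abs_sub_le' (hYb _ hp.2) (bound_limG hμc hμ1 hμ2 hσB hMcb p.1))
        (hMcb c hc))
      ((hLσ' _ _).trans (mul_le_mul_of_nonneg_left hdZ hB))
  calc |(p.2 - limG σ μc μW1 μW2 Ca W1a W2a t p.1) * Ca t c *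
      deriv σ (limZ σ μW1 μW2 W1a W2a t c p.1) * σ (⟪W1a t w, p.1⟫) -
      (p.2 - limG σ μc μW1 μW2 Cb W1b W2b t p.1) * Cb t c *
      deriv σ (limZ σ μW1 μW2 W1b W2b t c p.1) * σ (⟪W1b t w, p.1⟫)|
      ≤ ((((B + M*B*(B + M*B*R))*φ)*M + (Y + M*B)*φ)*B +
        ((Y + M*B)*M)*(B*((B + M*B*R)*φ)))*B +
        ((Y + M*B)*M*B)*(B*(φ*R)) :=
      abs_mul_sub_le' hstep2 (hσB _)
        (abs_mul_le' (abs_mul_le' (abs_sub_le' (hYb _ hp.2)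
          (bound_limG hμc hμ1 hμ2 hσB hMcb p.1)) (hMcb c hc)) (hσB' _))
        ((hLσ _ _).trans (mul_le_mul_of_nonneg_left hinner hB))
    _ = ((((B + M*B*(B + M*B*R))*M + (Y + M*B))*B +
        (Y + M*B)*M*(B*(B + M*B*R)))*B + (Y + M*B)*M*B*(B*R))*φ := by ring
end DiffF


/-- **Uniqueness for the limiting two-layer system.** Two uniformly bounded solutions of
the limiting system (with the same initial conditions, which are built into the integral
equations) coincide on `[0,1]` on `C × W¹ × W²`, and so do the associated quantities
`Z̃, V` and the network outputs `g`. -/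
theorem limit_system_uniqueness
    (d : ℕ)
    (SX : Set (Euc d)) (SY : Set ℝ) (SC : Set ℝ) (SW1 : Set (Euc d)) (SW2 : Set ℝ)
    (hSX : IsCompact SX) (hSY : IsCompact SY) (hSC : IsCompact SC)
    (hSW1 : IsCompact SW1) (hSW2 : IsCompact SW2)
    (σ : ℝ → ℝ) (hσ : ContDiff ℝ 2 σ)
    (hσb : ∃ B, ∀ z, |σ z| ≤ B ∧ |deriv σ z| ≤ B ∧ |deriv (deriv σ) z| ≤ B)
    (π : Measure (Euc d × ℝ)) (μc : Measure ℝ) (μW1 : Measure (Euc d)) (μW2 : Measure ℝ)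
    (hπ : IsProbabilityMeasure π) (hμc : IsProbabilityMeasure μc)
    (hμW1 : IsProbabilityMeasure μW1) (hμW2 : IsProbabilityMeasure μW2)
    (hπs : π ((SX ×ˢ SY)ᶜ) = 0) (hμcs : μc SCᶜ = 0)
    (hμW1s : μW1 SW1ᶜ = 0) (hμW2s : μW2 SW2ᶜ = 0)
    (Ct₁ : ℝ → ℝ → ℝ) (W1t₁ : ℝ → Euc d → Euc d) (W2t₁ : ℝ → ℝ → Euc d → ℝ → ℝ)
    (Ct₂ : ℝ → ℝ → ℝ) (W1t₂ : ℝ → Euc d → Euc d) (W2t₂ : ℝ → ℝ → Euc d → ℝ → ℝ)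
    (hsol₁ : IsLimitSolution σ π μc μW1 μW2 SC SW1 SW2 Ct₁ W1t₁ W2t₁)
    (hsol₂ : IsLimitSolution σ π μc μW1 μW2 SC SW1 SW2 Ct₂ W1t₂ W2t₂)
    (hbd₁ : ∃ M : ℝ, ∀ t ∈ Set.Icc (0:ℝ) 1,
      (∀ c ∈ SC, |Ct₁ t c| ≤ M) ∧ (∀ w ∈ SW1, ‖W1t₁ t w‖ ≤ M) ∧
      (∀ c ∈ SC, ∀ w ∈ SW1, ∀ u ∈ SW2, |W2t₁ t c w u| ≤ M))
    (hbd₂ : ∃ M : ℝ, ∀ t ∈ Set.Icc (0:ℝ) 1,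
      (∀ c ∈ SC, |Ct₂ t c| ≤ M) ∧ (∀ w ∈ SW1, ‖W1t₂ t w‖ ≤ M) ∧
      (∀ c ∈ SC, ∀ w ∈ SW1, ∀ u ∈ SW2, |W2t₂ t c w u| ≤ M)) :
    ∀ t ∈ Set.Icc (0:ℝ) 1,
      (∀ c ∈ SC, Ct₁ t c = Ct₂ t c) ∧
      (∀ w ∈ SW1, W1t₁ t w = W1t₂ t w) ∧
      (∀ c ∈ SC, ∀ w ∈ SW1, ∀ u ∈ SW2, W2t₁ t c w u = W2t₂ t c w u) ∧
      (∀ c ∈ SC, ∀ x ∈ SX,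
        limZ σ μW1 μW2 W1t₁ W2t₁ t c x = limZ σ μW1 μW2 W1t₂ W2t₂ t c x) ∧
      (∀ w ∈ SW1, ∀ x ∈ SX,
        limV σ μc μW1 μW2 Ct₁ W1t₁ W2t₁ t w x = limV σ μc μW1 μW2 Ct₂ W1t₂ W2t₂ t w x) ∧
      (∀ x ∈ SX,
        limG σ μc μW1 μW2 Ct₁ W1t₁ W2t₁ t x = limG σ μc μW1 μW2 Ct₂ W1t₂ W2t₂ t x) := by

  obtain ⟨B, hB⟩ := hσb
  have hB0 : 0 ≤ B := (abs_nonneg _).trans (hB 0).1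
  have hσB : ∀ z, |σ z| ≤ B := fun z => (hB z).1
  have hσB' : ∀ z, |deriv σ z| ≤ B := fun z => (hB z).2.1
  obtain ⟨hLσ, hLσ'⟩ := sigma_facts hσ hB
  have hσc : Continuous σ := hσ.continuous
  have hσc' : Continuous (deriv σ) := hσ.continuous_deriv (by norm_num)
  obtain ⟨M₁, hM₁⟩ := hbd₁
  obtain ⟨M₂, hM₂⟩ := hbd₂
  obtain ⟨hcC₁, hcW1₁, hcW2₁, hmC₁, hmW1₁, hmW2₁, heqC₁, heqW1₁, heqW2₁⟩ := hsol₁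
  obtain ⟨hcC₂, hcW1₂, hcW2₂, hmC₂, hmW1₂, hmW2₂, heqC₂, heqW1₂, heqW2₂⟩ := hsol₂
  set M : ℝ := max (max M₁ M₂) 0 with hMdef
  have hM0 : 0 ≤ M := le_max_right _ _
  have hM₁M : M₁ ≤ M := le_trans (le_max_left _ _) (le_max_left _ _)
  have hM₂M : M₂ ≤ M := le_trans (le_max_right _ _) (le_max_left _ _)
  have hMc1 : ∀ s ∈ Set.Icc (0:ℝ) 1, ∀ c ∈ SC, |Ct₁ s c| ≤ M :=
    fun s hs c hc => ((hM₁ s hs).1 c hc).trans hM₁M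
  have hM11 : ∀ s ∈ Set.Icc (0:ℝ) 1, ∀ w ∈ SW1, ‖W1t₁ s w‖ ≤ M :=
    fun s hs w hw => ((hM₁ s hs).2.1 w hw).trans hM₁M
  have hM21 : ∀ s ∈ Set.Icc (0:ℝ) 1, ∀ c ∈ SC, ∀ w ∈ SW1, ∀ u ∈ SW2, |W2t₁ s c w u| ≤ M :=
    fun s hs c hc w hw u hu => ((hM₁ s hs).2.2 c hc w hw u hu).trans hM₁M
  have hMc2 : ∀ s ∈ Set.Icc (0:ℝ) 1, ∀ c ∈ SC, |Ct₂ s c| ≤ M :=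
    fun s hs c hc => ((hM₂ s hs).1 c hc).trans hM₂M
  have hM12 : ∀ s ∈ Set.Icc (0:ℝ) 1, ∀ w ∈ SW1, ‖W1t₂ s w‖ ≤ M :=
    fun s hs w hw => ((hM₂ s hs).2.1 w hw).trans hM₂M
  have hM22 : ∀ s ∈ Set.Icc (0:ℝ) 1, ∀ c ∈ SC, ∀ w ∈ SW1, ∀ u ∈ SW2, |W2t₂ s c w u| ≤ M :=
    fun s hs c hc w hw u hu => ((hM₂ s hs).2.2 c hc w hw u hu).trans hM₂M
  obtain ⟨R, hR0, hXR⟩ : ∃ R, 0 ≤ R ∧ ∀ x ∈ SX, ‖x‖ ≤ R := by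
    obtain ⟨R₀, hR₀⟩ := hSX.isBounded.subset_closedBall 0
    exact ⟨max R₀ 0, le_max_right _ _, fun x hx => le_trans
      (by simpa [Metric.mem_closedBall, dist_zero_right] using hR₀ hx) (le_max_left _ _)⟩
  obtain ⟨Y, hY0, hYb⟩ : ∃ Y, 0 ≤ Y ∧ ∀ y ∈ SY, |y| ≤ Y := by
    obtain ⟨Y₀, hY₀⟩ := hSY.isBounded.subset_closedBall 0
    exact ⟨max Y₀ 0, le_max_right _ _, fun y hy => le_trans
      (by simpa [Metric.mem_closedBall, Real.dist_eq] using hY₀ hy) (le_max_left _ _)⟩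
  obtain ⟨K, hK0, hKFC, hKFW1, hKFW2⟩ : ∃ K, 0 ≤ K ∧
      ((B + M*B*(B + M*B*R))*B + (Y + M*B)*(B*(B + M*B*R))) ≤ K ∧
      ((((B + M*B*(B + M*B*R))*(M*B*M) + (Y + M*B)*((B + M*B*(B + M*B*R))*M + M*B))*B +
        (Y + M*B)*(M*B*M)*(B*R))*R) ≤ K ∧
      (((((B + M*B*(B + M*B*R))*M + (Y + M*B))*B + (Y + M*B)*M*(B*(B + M*B*R)))*B +
        (Y + M*B)*M*B*(B*R))) ≤ K := by
    have hKZ0 : 0 ≤ B + M*B*R := add_nonneg hB0 (mul_nonneg (mul_nonneg hM0 hB0) hR0)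
    have hKg0 : 0 ≤ B + M*B*(B + M*B*R) :=
      add_nonneg hB0 (mul_nonneg (mul_nonneg hM0 hB0) hKZ0)
    have hA0 : 0 ≤ Y + M*B := add_nonneg hY0 (mul_nonneg hM0 hB0)
    have hVB0 : 0 ≤ M*B*M := mul_nonneg (mul_nonneg hM0 hB0) hM0
    have hKV0 : 0 ≤ (B + M*B*(B + M*B*R))*M + M*B :=
      add_nonneg (mul_nonneg hKg0 hM0) (mul_nonneg hM0 hB0)
    have h1 : 0 ≤ (B + M*B*(B + M*B*R))*B + (Y + M*B)*(B*(B + M*B*R)) :=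
      add_nonneg (mul_nonneg hKg0 hB0) (mul_nonneg hA0 (mul_nonneg hB0 hKZ0))
    have h2 : 0 ≤ (((B + M*B*(B + M*B*R))*(M*B*M) +
        (Y + M*B)*((B + M*B*(B + M*B*R))*M + M*B))*B + (Y + M*B)*(M*B*M)*(B*R))*R :=
      mul_nonneg (add_nonneg (mul_nonneg (add_nonneg (mul_nonneg hKg0 hVB0)
        (mul_nonneg hA0 hKV0)) hB0) (mul_nonneg (mul_nonneg hA0 hVB0)
        (mul_nonneg hB0 hR0))) hR0
    have h3 : 0 ≤ ((((B + M*B*(B + M*B*R))*M + (Y + M*B))*B +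
        (Y + M*B)*M*(B*(B + M*B*R)))*B + (Y + M*B)*M*B*(B*R)) :=
      add_nonneg (mul_nonneg (add_nonneg (mul_nonneg (add_nonneg (mul_nonneg hKg0 hM0) hA0)
        hB0) (mul_nonneg (mul_nonneg hA0 hM0) (mul_nonneg hB0 hKZ0))) hB0)
        (mul_nonneg (mul_nonneg (mul_nonneg hA0 hM0) hB0) (mul_nonneg hB0 hR0))
    refine ⟨((B + M*B*(B + M*B*R))*B + (Y + M*B)*(B*(B + M*B*R))) +
      ((((B + M*B*(B + M*B*R))*(M*B*M) + (Y + M*B)*((B + M*B*(B + M*B*R))*M + M*B))*B +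
        (Y + M*B)*(M*B*M)*(B*R))*R) +
      (((((B + M*B*(B + M*B*R))*M + (Y + M*B))*B + (Y + M*B)*M*(B*(B + M*B*R)))*B +
        (Y + M*B)*M*B*(B*R))), by linarith, by linarith, by linarith, by linarith⟩
  have gron : ∀ n : ℕ, ∀ t ∈ Set.Icc (0:ℝ) 1,
      (∀ c ∈ SC, |Ct₁ t c - Ct₂ t c| ≤ 2*M * K^n * t^n / n.factorial) ∧
      (∀ w ∈ SW1, ‖W1t₁ t w - W1t₂ t w‖ ≤ 2*M * K^n * t^n / n.factorial) ∧
      (∀ c ∈ SC, ∀ w ∈ SW1, ∀ u ∈ SW2, |W2t₁ t c w u - W2t₂ t c w u|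
        ≤ 2*M * K^n * t^n / n.factorial) := by
    intro n
    induction n with
    | zero =>
      intro t ht
      simp only [pow_zero, Nat.factorial_zero, Nat.cast_one, mul_one, div_one]
      refine ⟨fun c hc => ?_, fun w hw => ?_, fun c hc w hw u hu => ?_⟩
      · have := abs_sub_le' (hMc1 t ht c hc) (hMc2 t ht c hc); linarith
      · have h := (norm_sub_le (W1t₁ t w) (W1t₂ t w)).trans
          (add_le_add (hM11 t ht w hw) (hM12 t ht w hw))
        linarith
      · have := abs_sub_le' (hM21 t ht c hc w hw u hu) (hM22 t ht c hc w hw u hu); linarith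
    | succ n ih =>
      intro t ht
      have hsub : Set.Icc (0:ℝ) t ⊆ Set.Icc (0:ℝ) 1 := Set.Icc_subset_Icc_right ht.2
      have hfacpos : (0:ℝ) < n.factorial := by exact_mod_cast n.factorial_pos
      have hφ0 : ∀ s : ℝ, 0 ≤ s → 0 ≤ 2*M * K^n * s^n / n.factorial := fun s hs =>
        div_nonneg (mul_nonneg (mul_nonneg (by linarith) (pow_nonneg hK0 n))
          (pow_nonneg hs n)) hfacpos.le
      have hpow : (∫ s in Set.Icc (0:ℝ) t, s^n) = t^(n+1)/(n+1) := by
        rw [MeasureTheory.integral_Icc_eq_integral_Ioc,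
          ← intervalIntegral.integral_of_le ht.1, integral_pow]
        simp
      have hgint : Integrable (fun s => (2*M*K^(n+1)/(n.factorial:ℝ)) * s^n)
          (volume.restrict (Set.Icc (0:ℝ) t)) :=
        (continuous_const.mul (continuous_pow n)).integrableOn_Icc
      have hfin : (2*M*K^(n+1)/(n.factorial:ℝ)) * (t^(n+1)/(n+1))
          = 2*M * K^(n+1) * t^(n+1) / (n+1).factorial := by
        rw [Nat.factorial_succ]
        push_cast
        rw [div_mul_div_comm, mul_comm ((n.factorial:ℝ)) ((n:ℝ)+1)]
      refine ⟨fun c hc => ?_, fun w hw => ?_, fun c hc w hw u hu => ?_⟩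
      · have hint₁ : IntegrableOn (fun s => ∫ p,
            (p.2 - limG σ μc μW1 μW2 Ct₁ W1t₁ W2t₁ s p.1) *
            σ (limZ σ μW1 μW2 W1t₁ W2t₁ s c p.1) ∂π) (Set.Icc 0 t) :=
          ((cont_FC hπs hμcs hμW1s hμW2s hσc hσB hcC₁ hcW1₁ hcW2₁ hmC₁ hmW1₁ hmW2₁
            hMc1 hM21 hM0 hYb hc).mono hsub).integrableOn_Icc
        have hint₂ : IntegrableOn (fun s => ∫ p,
            (p.2 - limG σ μc μW1 μW2 Ct₂ W1t₂ W2t₂ s p.1) *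
            σ (limZ σ μW1 μW2 W1t₂ W2t₂ s c p.1) ∂π) (Set.Icc 0 t) :=
          ((cont_FC hπs hμcs hμW1s hμW2s hσc hσB hcC₂ hcW1₂ hcW2₂ hmC₂ hmW1₂ hmW2₂
            hMc2 hM22 hM0 hYb hc).mono hsub).integrableOn_Icc
        rw [heqC₁ t ht c hc, heqC₂ t ht c hc, add_sub_add_left_eq_sub,
          ← integral_sub hint₁ hint₂]
        have haeb : ∀ᵐ s ∂(volume.restrict (Set.Icc (0:ℝ) t)),
            ‖(∫ p, (p.2 - limG σ μc μW1 μW2 Ct₁ W1t₁ W2t₁ s p.1) *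
              σ (limZ σ μW1 μW2 W1t₁ W2t₁ s c p.1) ∂π) -
            ∫ p, (p.2 - limG σ μc μW1 μW2 Ct₂ W1t₂ W2t₂ s p.1) *
              σ (limZ σ μW1 μW2 W1t₂ W2t₂ s c p.1) ∂π‖
            ≤ (2*M*K^(n+1)/(n.factorial:ℝ)) * s^n := by
          rw [MeasureTheory.ae_restrict_iff' measurableSet_Icc]
          refine Filter.Eventually.of_forall (fun s hs => ?_)
          have hs' : s ∈ Set.Icc (0:ℝ) 1 := ⟨hs.1, hs.2.trans ht.2⟩
          have hφs := hφ0 s hs.1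
          have hd := diff_FC hπs hμcs hμW1s hμW2s hσc hσB hLσ hM0 hφs hR0
            (hmC₁ s) (hmC₂ s) (hmW1₁ s) (hmW2₁ s) (hmW1₂ s) (hmW2₂ s)
            (hMc1 s hs') (hMc2 s hs') (hM21 s hs') (hM22 s hs')
            (ih s hs').1 (ih s hs').2.1 (ih s hs').2.2 hYb hXR hc
          rw [Real.norm_eq_abs]
          calc _ ≤ ((B + M*B*(B + M*B*R))*B + (Y + M*B)*(B*(B + M*B*R))) *
              (2*M * K^n * s^n / n.factorial) := hd
            _ ≤ K * (2*M * K^n * s^n / n.factorial) := mul_le_mul_of_nonneg_right hKFC hφs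
            _ = (2*M*K^(n+1)/(n.factorial:ℝ)) * s^n := by rw [pow_succ]; ring
        have hbound := norm_integral_le_of_norm_le hgint haeb
        rw [Real.norm_eq_abs] at hbound
        calc _ ≤ ∫ s in Set.Icc (0:ℝ) t, (2*M*K^(n+1)/(n.factorial:ℝ)) * s^n := hbound
          _ = (2*M*K^(n+1)/(n.factorial:ℝ)) * ∫ s in Set.Icc (0:ℝ) t, s^n :=
            integral_const_mul _ _
          _ = 2*M * K^(n+1) * t^(n+1) / (n+1).factorial := by rw [hpow]; exact hfin
      · have hint₁ : IntegrableOn (fun s => ∫ p,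
            ((p.2 - limG σ μc μW1 μW2 Ct₁ W1t₁ W2t₁ s p.1) *
            limV σ μc μW1 μW2 Ct₁ W1t₁ W2t₁ s w p.1 *
            deriv σ (⟪W1t₁ s w, p.1⟫)) • p.1 ∂π) (Set.Icc 0 t) :=
          ((cont_FW1 hπs hμcs hμW1s hμW2s hσc hσc' hσB hσB' hcC₁ hcW1₁ hcW2₁ hmC₁ hmW1₁
            hmW2₁ hMc1 hM21 hM0 hYb hXR hw).mono hsub).integrableOn_Icc
        have hint₂ : IntegrableOn (fun s => ∫ p,
            ((p.2 - limG σ μc μW1 μW2 Ct₂ W1t₂ W2t₂ s p.1) *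
            limV σ μc μW1 μW2 Ct₂ W1t₂ W2t₂ s w p.1 *
            deriv σ (⟪W1t₂ s w, p.1⟫)) • p.1 ∂π) (Set.Icc 0 t) :=
          ((cont_FW1 hπs hμcs hμW1s hμW2s hσc hσc' hσB hσB' hcC₂ hcW1₂ hcW2₂ hmC₂ hmW1₂
            hmW2₂ hMc2 hM22 hM0 hYb hXR hw).mono hsub).integrableOn_Icc
        rw [heqW1₁ t ht w hw, heqW1₂ t ht w hw, add_sub_add_left_eq_sub,
          ← integral_sub hint₁ hint₂]
        have haeb : ∀ᵐ s ∂(volume.restrict (Set.Icc (0:ℝ) t)),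
            ‖(∫ p, ((p.2 - limG σ μc μW1 μW2 Ct₁ W1t₁ W2t₁ s p.1) *
              limV σ μc μW1 μW2 Ct₁ W1t₁ W2t₁ s w p.1 *
              deriv σ (⟪W1t₁ s w, p.1⟫)) • p.1 ∂π) -
            ∫ p, ((p.2 - limG σ μc μW1 μW2 Ct₂ W1t₂ W2t₂ s p.1) *
              limV σ μc μW1 μW2 Ct₂ W1t₂ W2t₂ s w p.1 *
              deriv σ (⟪W1t₂ s w, p.1⟫)) • p.1 ∂π‖
            ≤ (2*M*K^(n+1)/(n.factorial:ℝ)) * s^n := by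
          rw [MeasureTheory.ae_restrict_iff' measurableSet_Icc]
          refine Filter.Eventually.of_forall (fun s hs => ?_)
          have hs' : s ∈ Set.Icc (0:ℝ) 1 := ⟨hs.1, hs.2.trans ht.2⟩
          have hφs := hφ0 s hs.1
          have hd := diff_FW1 hπs hμcs hμW1s hμW2s hσc hσc' hσB hσB' hLσ hLσ' hM0 hφs hR0
            (hmC₁ s) (hmC₂ s) (hmW1₁ s) (hmW2₁ s) (hmW1₂ s) (hmW2₂ s)
            (hMc1 s hs') (hMc2 s hs') (hM21 s hs') (hM22 s hs')
            (ih s hs').1 (ih s hs').2.1 (ih s hs').2.2 hYb hXR hw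
          calc _ ≤ (((B + M*B*(B + M*B*R))*(M*B*M) +
              (Y + M*B)*((B + M*B*(B + M*B*R))*M + M*B))*B +
              (Y + M*B)*(M*B*M)*(B*R))*R * (2*M * K^n * s^n / n.factorial) := hd
            _ ≤ K * (2*M * K^n * s^n / n.factorial) := mul_le_mul_of_nonneg_right hKFW1 hφs
            _ = (2*M*K^(n+1)/(n.factorial:ℝ)) * s^n := by rw [pow_succ]; ring
        have hbound := norm_integral_le_of_norm_le hgint haeb
        calc _ ≤ ∫ s in Set.Icc (0:ℝ) t, (2*M*K^(n+1)/(n.factorial:ℝ)) * s^n := hbound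
          _ = (2*M*K^(n+1)/(n.factorial:ℝ)) * ∫ s in Set.Icc (0:ℝ) t, s^n :=
            integral_const_mul _ _
          _ = 2*M * K^(n+1) * t^(n+1) / (n+1).factorial := by rw [hpow]; exact hfin
      · have hint₁ : IntegrableOn (fun s => ∫ p,
            (p.2 - limG σ μc μW1 μW2 Ct₁ W1t₁ W2t₁ s p.1) * Ct₁ s c *
            deriv σ (limZ σ μW1 μW2 W1t₁ W2t₁ s c p.1) *
            σ (⟪W1t₁ s w, p.1⟫) ∂π) (Set.Icc 0 t) :=
          ((cont_FW2 hπs hμcs hμW1s hμW2s hσc hσc' hσB hσB' hcC₁ hcW1₁ hcW2₁ hmC₁ hmW1₁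
            hmW2₁ hMc1 hM21 hM0 hYb hc hw).mono hsub).integrableOn_Icc
        have hint₂ : IntegrableOn (fun s => ∫ p,
            (p.2 - limG σ μc μW1 μW2 Ct₂ W1t₂ W2t₂ s p.1) * Ct₂ s c *
            deriv σ (limZ σ μW1 μW2 W1t₂ W2t₂ s c p.1) *
            σ (⟪W1t₂ s w, p.1⟫) ∂π) (Set.Icc 0 t) :=
          ((cont_FW2 hπs hμcs hμW1s hμW2s hσc hσc' hσB hσB' hcC₂ hcW1₂ hcW2₂ hmC₂ hmW1₂
            hmW2₂ hMc2 hM22 hM0 hYb hc hw).mono hsub).integrableOn_Icc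
        rw [heqW2₁ t ht c hc w hw u hu, heqW2₂ t ht c hc w hw u hu, add_sub_add_left_eq_sub,
          ← integral_sub hint₁ hint₂]
        have haeb : ∀ᵐ s ∂(volume.restrict (Set.Icc (0:ℝ) t)),
            ‖(∫ p, (p.2 - limG σ μc μW1 μW2 Ct₁ W1t₁ W2t₁ s p.1) * Ct₁ s c *
              deriv σ (limZ σ μW1 μW2 W1t₁ W2t₁ s c p.1) * σ (⟪W1t₁ s w, p.1⟫) ∂π) -
            ∫ p, (p.2 - limG σ μc μW1 μW2 Ct₂ W1t₂ W2t₂ s p.1) * Ct₂ s c *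
              deriv σ (limZ σ μW1 μW2 W1t₂ W2t₂ s c p.1) * σ (⟪W1t₂ s w, p.1⟫) ∂π‖
            ≤ (2*M*K^(n+1)/(n.factorial:ℝ)) * s^n := by
          rw [MeasureTheory.ae_restrict_iff' measurableSet_Icc]
          refine Filter.Eventually.of_forall (fun s hs => ?_)
          have hs' : s ∈ Set.Icc (0:ℝ) 1 := ⟨hs.1, hs.2.trans ht.2⟩
          have hφs := hφ0 s hs.1
          have hd := diff_FW2 hπs hμcs hμW1s hμW2s hσc hσc' hσB hσB' hLσ hLσ' hM0 hφs hR0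
            (hmC₁ s) (hmC₂ s) (hmW1₁ s) (hmW2₁ s) (hmW1₂ s) (hmW2₂ s)
            (hMc1 s hs') (hMc2 s hs') (hM21 s hs') (hM22 s hs')
            (ih s hs').1 (ih s hs').2.1 (ih s hs').2.2 hYb hXR hc hw
          rw [Real.norm_eq_abs]
          calc _ ≤ ((((B + M*B*(B + M*B*R))*M + (Y + M*B))*B +
              (Y + M*B)*M*(B*(B + M*B*R)))*B + (Y + M*B)*M*B*(B*R)) *
              (2*M * K^n * s^n / n.factorial) := hd
            _ ≤ K * (2*M * K^n * s^n / n.factorial) := mul_le_mul_of_nonneg_right hKFW2 hφs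
            _ = (2*M*K^(n+1)/(n.factorial:ℝ)) * s^n := by rw [pow_succ]; ring
        have hbound := norm_integral_le_of_norm_le hgint haeb
        rw [Real.norm_eq_abs] at hbound
        calc _ ≤ ∫ s in Set.Icc (0:ℝ) t, (2*M*K^(n+1)/(n.factorial:ℝ)) * s^n := hbound
          _ = (2*M*K^(n+1)/(n.factorial:ℝ)) * ∫ s in Set.Icc (0:ℝ) t, s^n :=
            integral_const_mul _ _
          _ = 2*M * K^(n+1) * t^(n+1) / (n+1).factorial := by rw [hpow]; exact hfin
  intro t ht
  have key0 : ∀ a : ℝ, (∀ n : ℕ, a ≤ 2*M * K^n * t^n / n.factorial) → a ≤ 0 := by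
    intro a ha
    have hlim : Filter.Tendsto (fun n : ℕ => 2*M*((K*t)^n/(n.factorial:ℝ)))
        Filter.atTop (nhds (2*M*0)) :=
      (FloorSemiring.tendsto_pow_div_factorial_atTop (K*t)).const_mul (2*M)
    rw [mul_zero] at hlim
    refine ge_of_tendsto' hlim (fun n => ?_)
    have e : 2*M*((K*t)^n/(n.factorial:ℝ)) = 2*M * K^n * t^n / n.factorial := by
      rw [mul_pow]; ring
    rw [e]; exact ha n
  have hCeq : ∀ c ∈ SC, Ct₁ t c = Ct₂ t c := by
    intro c hc
    have h := key0 _ (fun n => (gron n t ht).1 c hc)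
    exact sub_eq_zero.mp (abs_eq_zero.mp (le_antisymm h (abs_nonneg _)))
  have hW1eq : ∀ w ∈ SW1, W1t₁ t w = W1t₂ t w := by
    intro w hw
    have h := key0 _ (fun n => (gron n t ht).2.1 w hw)
    exact sub_eq_zero.mp (norm_le_zero_iff.mp h)
  have hW2eq : ∀ c ∈ SC, ∀ w ∈ SW1, ∀ u ∈ SW2, W2t₁ t c w u = W2t₂ t c w u := by
    intro c hc w hw u hu
    have h := key0 _ (fun n => (gron n t ht).2.2 c hc w hw u hu)
    exact sub_eq_zero.mp (abs_eq_zero.mp (le_antisymm h (abs_nonneg _)))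
  have haec := ae_mem_of_compl_null hμcs
  have haeW1 := ae_mem_of_compl_null hμW1s
  have haeW2 := ae_mem_of_compl_null hμW2s
  have hZeq : ∀ c ∈ SC, ∀ x : Euc d,
      limZ σ μW1 μW2 W1t₁ W2t₁ t c x = limZ σ μW1 μW2 W1t₂ W2t₂ t c x := by
    intro c hc x
    rw [limZ, limZ]
    apply integral_congr_ae
    filter_upwards [haeW1] with w hw
    apply integral_congr_ae
    filter_upwards [haeW2] with u hu
    rw [hW2eq c hc w hw u hu, hW1eq w hw]
  have hJeq : ∀ c ∈ SC, ∀ w ∈ SW1,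
      (∫ u, W2t₁ t c w u ∂μW2) = ∫ u, W2t₂ t c w u ∂μW2 := by
    intro c hc w hw
    apply integral_congr_ae
    filter_upwards [haeW2] with u hu
    rw [hW2eq c hc w hw u hu]
  have hGeq : ∀ x : Euc d,
      limG σ μc μW1 μW2 Ct₁ W1t₁ W2t₁ t x = limG σ μc μW1 μW2 Ct₂ W1t₂ W2t₂ t x := by
    intro x
    rw [limG, limG]
    apply integral_congr_ae
    filter_upwards [haec] with c hc
    rw [hCeq c hc, hZeq c hc x]
  have hVeq : ∀ w ∈ SW1, ∀ x : Euc d,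
      limV σ μc μW1 μW2 Ct₁ W1t₁ W2t₁ t w x = limV σ μc μW1 μW2 Ct₂ W1t₂ W2t₂ t w x := by
    intro w hw x
    rw [limV, limV]
    apply integral_congr_ae
    filter_upwards [haec] with c hc
    rw [hCeq c hc, hZeq c hc x, hJeq c hc w hw]
  exact ⟨hCeq, hW1eq, hW2eq, fun c hc x _ => hZeq c hc x,
    fun w hw x _ => hVeq w hw x, fun x _ => hGeq x⟩
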